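/- arXiv:1909.09630 — 5 statements merged into one kernel-verified Lean document; each statement's English description precedes it below -/
import Mathlib

section
/- Fix an integer n ≥ (128/49)·ln 6 and an integer m with 0 ≤ m ≤ n/8, and let p(m,n) = 1/2 + m/(2n) + √(ln(6)/(2n)). If W⁺ is distributed as Bin(n, p(m,n)), then Pr[ W⁺ < (n+m)/2 or W⁺ > (n+m)/2 + √(2n·ln 6) ] < 1/3. -/
/-!
Both tails are bounded by Hoeffding's inequality for the binomial distribution,
`Pr[W > np + d] < exp(-2d²/n)` and `Pr[W < np - d] < exp(-2d²/n)`, proved by the Chernoff method: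
Markov's inequality for `exp (t W)`, the moment generating function `(1 - p + p eᵗ)ⁿ`, Hoeffding's
lemma `1 - p + p eᵗ ≤ exp (t p + t²/8)`, and the choice `t = ±4d/n`. The mean `n p(m,n)` lies
exactly `d = √(2n ln 6)/2` above `(n+m)/2` and below `(n+m)/2 + √(2n ln 6)`, so each tail is
below `exp(-ln 6) = 1/6`.
-/

open Real Finset MeasureTheory ProbabilityTheory

/-- The probability that a binomial random variable with `n` trials and
success probability `p` equals `k`. -/
noncomputable def binomPMF (n : ℕ) (p : ℝ) (k : ℕ) : ℝ :=
  (n.choose k : ℝ) * p ^ k * (1 - p) ^ (n - k)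

lemma one_sub_add_mul_exp_le {p : ℝ} (hp0 : 0 ≤ p) (hp1 : p ≤ 1) (t : ℝ) :
    1 - p + p * exp t ≤ exp (t * p + t ^ 2 / 8) := by
  set μ := bernoulliMeasure (1 : ℝ) 0 ⟨p, hp0, hp1⟩
  have hbdd : ∀ᵐ x ∂μ, id x ∈ Set.Icc (0 : ℝ) 1 := by
    rw [ae_iff]
    exact bernoulliMeasure_apply_of_notMem_of_notMem _ measurableSet_Icc.compl
      (by norm_num) (by norm_num)
  have hoeffding := (hasSubgaussianMGF_of_mem_Icc aemeasurable_id hbdd).mgf_le t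
  simp only [μ, mgf, integral_bernoulliMeasure] at hoeffding
  norm_num at hoeffding
  calc 1 - p + p * exp t
      = exp (t * p) * (p * exp (t * (1 - p)) + (1 - p) * exp (-(t * p))) := by
        rw [show t * (1 - p) = t + -(t * p) by ring, exp_add, exp_neg]
        field_simp
        ring
    _ ≤ exp (t * p) * exp (t ^ 2 / 8) := by
        gcongr
        exact hoeffding.trans_eq (by ring_nf)
    _ = exp (t * p + t ^ 2 / 8) := (exp_add _ _).symm

section Binomial

variable {n : ℕ} {p : ℝ}

lemma binomPMF_nonneg (hp0 : 0 ≤ p) (hp1 : p ≤ 1) (k : ℕ) : 0 ≤ binomPMF n p k := by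
  have : 0 ≤ 1 - p := by linarith
  unfold binomPMF
  positivity

lemma exists_binomPMF_pos_of_le_mean (hp0 : 0 ≤ p) (hp1 : p ≤ 1) :
    ∃ k ≤ n, (k : ℝ) ≤ n * p ∧ 0 < binomPMF n p k := by
  rcases hp1.lt_or_eq with hp1 | rfl
  · have : 0 < 1 - p := by linarith
    exact ⟨0, Nat.zero_le _, by simp; positivity, by simp [binomPMF]; positivity⟩
  · exact ⟨n, le_rfl, by simp, by simp [binomPMF]⟩

lemma exists_binomPMF_pos_of_mean_le (hp0 : 0 ≤ p) (hp1 : p ≤ 1) :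
    ∃ k ≤ n, n * p ≤ (k : ℝ) ∧ 0 < binomPMF n p k := by
  rcases hp0.lt_or_eq with hp0 | rfl
  · exact ⟨n, le_rfl, by nlinarith, by simp [binomPMF]; positivity⟩
  · exact ⟨0, Nat.zero_le _, by simp, by simp [binomPMF]⟩

lemma sum_binomPMF_mul_exp (n : ℕ) (p t : ℝ) :
    ∑ k ∈ range (n + 1), binomPMF n p k * exp (t * k) = (1 - p + p * exp t) ^ n := by
  rw [add_comm (1 - p), add_pow]
  refine sum_congr rfl fun k _ => ?_
  rw [binomPMF, mul_comm t, exp_nat_mul]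
  ring

lemma sum_ite_binomPMF_lt {P : ℕ → Prop} [DecidablePred P] (hp0 : 0 ≤ p) (hp1 : p ≤ 1)
    {t a : ℝ} (hP : ∀ k, P k → t * a ≤ t * k) {k₀ : ℕ} (hk₀ : k₀ ≤ n) (hk₀P : ¬ P k₀)
    (hk₀pos : 0 < binomPMF n p k₀) :
    ∑ k ∈ range (n + 1), (if P k then binomPMF n p k else 0)
      < exp (t * (n * p - a) + n * t ^ 2 / 8) := by
  have hmgf_pos : 0 ≤ 1 - p + p * exp t := by nlinarith [exp_pos t]
  calc ∑ k ∈ range (n + 1), (if P k then binomPMF n p k else 0)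
      < ∑ k ∈ range (n + 1), binomPMF n p k * exp (t * (k - a)) := by
        refine sum_lt_sum (fun k _ => ?_) ⟨k₀, mem_range.2 (Nat.lt_succ_of_le hk₀), ?_⟩
        · have := binomPMF_nonneg (n := n) hp0 hp1 k
          split_ifs with hk
          · exact le_mul_of_one_le_right this (one_le_exp (by nlinarith [hP k hk]))
          · positivity
        · rw [if_neg hk₀P]
          positivity
    _ = exp (-(t * a)) * (1 - p + p * exp t) ^ n := by
        rw [← sum_binomPMF_mul_exp, mul_sum]
        refine sum_congr rfl fun k _ => ?_
        rw [mul_sub, sub_eq_neg_add, exp_add]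
        ring
    _ ≤ exp (-(t * a)) * exp (t * p + t ^ 2 / 8) ^ n := by
        gcongr
        exact one_sub_add_mul_exp_le hp0 hp1 t
    _ = exp (t * (n * p - a) + n * t ^ 2 / 8) := by
        rw [← exp_nat_mul, ← exp_add]
        ring_nf

lemma binom_upper_tail_lt (hp0 : 0 ≤ p) (hp1 : p ≤ 1) (hn : 0 < n) {d : ℝ} (hd : 0 ≤ d) :
    ∑ k ∈ range (n + 1), (if n * p + d < (k : ℝ) then binomPMF n p k else 0)
      < exp (-(2 * d ^ 2 / n)) := by
  have hn' : (0 : ℝ) < n := by exact_mod_cast hn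
  obtain ⟨k₀, hk₀, hk₀mean, hk₀pos⟩ := exists_binomPMF_pos_of_le_mean (n := n) hp0 hp1
  convert sum_ite_binomPMF_lt hp0 hp1 (t := 4 * d / n) (a := n * p + d)
    (fun k (hk : n * p + d < (k : ℝ)) => mul_le_mul_of_nonneg_left hk.le (by positivity)) hk₀
    (by push Not; linarith) hk₀pos using 2
  field_simp
  ring

lemma binom_lower_tail_lt (hp0 : 0 ≤ p) (hp1 : p ≤ 1) (hn : 0 < n) {d : ℝ} (hd : 0 ≤ d) :
    ∑ k ∈ range (n + 1), (if (k : ℝ) < n * p - d then binomPMF n p k else 0)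
      < exp (-(2 * d ^ 2 / n)) := by
  have hn' : (0 : ℝ) < n := by exact_mod_cast hn
  obtain ⟨k₀, hk₀, hk₀mean, hk₀pos⟩ := exists_binomPMF_pos_of_mean_le (n := n) hp0 hp1
  have ht : -(4 * d / n) ≤ 0 := neg_nonpos.2 (by positivity)
  convert sum_ite_binomPMF_lt hp0 hp1 (t := -(4 * d / n)) (a := n * p - d)
    (fun k (hk : (k : ℝ) < n * p - d) => mul_le_mul_of_nonpos_left hk.le ht) hk₀
    (by push Not; linarith) hk₀pos using 2
  field_simp
  ring

end Binomial

lemma sum_ite_or_le {ι : Type*} {s : Finset ι} {f : ι → ℝ} (hf : ∀ i ∈ s, 0 ≤ f i)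
    {P Q : ι → Prop} [DecidablePred P] [DecidablePred Q] :
    ∑ i ∈ s, (if P i ∨ Q i then f i else 0)
      ≤ ∑ i ∈ s, (if P i then f i else 0) + ∑ i ∈ s, (if Q i then f i else 0) := by
  rw [← sum_add_distrib]
  refine sum_le_sum fun i hi => ?_
  have := hf i hi
  split_ifs <;> first | linarith | tauto

/-- for `n ≥ (128/49)·ln 6`, `0 ≤ m ≤ n/8`, and
`W⁺ ~ Bin(n, p(m,n))` with `p(m,n) = 1/2 + m/(2n) + √(ln 6/(2n))`,
`Pr[W⁺ < (n+m)/2 or W⁺ > (n+m)/2 + √(2n ln 6)] < 1/3`. -/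
theorem stmt_1 (n m : ℕ) (hn : (128 / 49 : ℝ) * Real.log 6 ≤ (n : ℝ))
    (hm : (m : ℝ) ≤ (n : ℝ) / 8) :
    (∑ k ∈ Finset.range (n + 1),
        if ((k : ℝ) < ((n : ℝ) + (m : ℝ)) / 2 ∨
            ((n : ℝ) + (m : ℝ)) / 2 + Real.sqrt (2 * n * Real.log 6) < (k : ℝ)) then
          binomPMF n (1/2 + (m : ℝ) / (2 * n) + Real.sqrt (Real.log 6 / (2 * n))) k
        else 0)
      < 1/3 := by
  set L := Real.log 6
  set s := √(2 * n * L)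
  set p := 1/2 + (m : ℝ) / (2 * n) + √(L / (2 * n))
  have hL : 0 < L := log_pos (by norm_num)
  have hn' : (0 : ℝ) < n := by nlinarith
  have hs2 : s ^ 2 = 2 * n * L := sq_sqrt (by positivity)
  have hsqrt : √(L / (2 * n)) = s / (2 * n) := by
    rw [show L / (2 * n) = 2 * n * L / (2 * n) ^ 2 by field_simp, sqrt_div' _ (by positivity),
      sqrt_sq (by positivity)]
  have hmean : n * p = (n + m) / 2 + s / 2 := by
    simp only [p, hsqrt]
    field_simp
  have hp0 : 0 ≤ p := by positivity
  have hp1 : p ≤ 1 := by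
    have hm' : (m : ℝ) / (2 * n) ≤ 1 / 16 := by
      rw [div_le_iff₀ (by positivity)]
      linarith
    have hL' : √(L / (2 * n)) ≤ 7 / 16 := by
      rw [sqrt_le_left (by norm_num), div_le_iff₀ (by positivity)]
      linarith
    simp only [p]
    linarith
  have htail : exp (-(2 * (s / 2) ^ 2 / n)) = 1 / 6 := by
    rw [show 2 * (s / 2) ^ 2 / n = L by rw [div_pow, hs2]; field_simp, exp_neg,
      exp_log (by norm_num), one_div]
  have hlower := binom_lower_tail_lt hp0 hp1 (Nat.cast_pos.1 hn') (d := s / 2) (by positivity)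
  have hupper := binom_upper_tail_lt hp0 hp1 (Nat.cast_pos.1 hn') (d := s / 2) (by positivity)
  rw [htail, show n * p - s / 2 = (n + m) / 2 by linarith] at hlower
  rw [htail, show n * p + s / 2 = (n + m) / 2 + s by linarith] at hupper
  refine (sum_ite_or_le fun k _ => binomPMF_nonneg hp0 hp1 k).trans_lt ?_
  linarith
end

section
/- Fix ε > 0, β ∈ (0,1), an even integer d > 4(e^{2ε}−1)²·ln(2/β), and an ε-private randomizer R from [d] to a countable message set 𝒴. Fix any message y ∈ 𝒴. If H is chosen uniformly at random among subsets of [d] of size d/2, then with probability at least 1−β over the choice of H, the message y is not v-leaky with respect to H and R, where v = (e^{2ε}−1)·√((4/d)·ln(2/β)). -/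
/-!
Write `a x = Pr[R(x) = y]` and `A` for its mean over `[d]`. Privacy confines every `a x / A` to
`[e^{-ε}, e^{ε}]`, and `Pr[R(U_H) = y] / Pr[R(U) = y] = 1 + (2/d) ∑_{x ∈ H} (a x / A - 1)`, so `y`
can only be `v`-leaky if the sum of the zero-sum family `a / A - 1` over the random half `H`
deviates from `0` by more than `(d/2) (1 - e^{-v})`. Hoeffding's inequality for sampling without
replacement bounds the probability of each of the two deviations by `β / 2`.

For that inequality, pair up the points and let `H` be the image of one point of each pair under
a uniformly random permutation. Flipping inside pairs leaves the distribution unchanged, and after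
averaging over the `2^(d/2)` flips the moment generating function factorises over the pairs, each
factor being bounded by Hoeffding's lemma for a fair two-point choice.
-/

open scoped Classical

/-- `probU R S y` is the probability that a sample from `R(U_S)` (draw `x`
uniformly from `S`, then sample a message from `R x`) equals `y`, where
`R x y` is the probability that randomizer `R` on input `x` outputs `y`. -/
noncomputable def probU {d : ℕ} {Y : Type*} (R : Fin d → Y → ℝ)
    (S : Finset (Fin d)) (y : Y) : ℝ :=
  (∑ x ∈ S, R x y) / (S.card : ℝ)

/-- A message `y` is `v`-leaky with respect to `H, R` if
`|ln (Pr[R(U_H) = y] / Pr[R(U) = y])| > v`. -/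
noncomputable def leaky {d : ℕ} {Y : Type*} (R : Fin d → Y → ℝ)
    (H : Finset (Fin d)) (v : ℝ) (y : Y) : Prop :=
  v < |Real.log (probU R H y / probU R Finset.univ y)|

open Finset
open scoped Pointwise

namespace Equiv.Perm

variable {α : Type*} [Fintype α] [DecidableEq α]

theorem exists_smul_finset_eq {s t : Finset α} (h : #s = #t) : ∃ τ : Perm α, τ • s = t := by
  let e : s ≃ t := Fintype.equivOfCardEq (by simpa using h)
  refine ⟨e.extendSubtype, eq_of_subset_of_card_le ?_ (by rw [card_smul_finset, h])⟩
  intro _ hy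
  obtain ⟨x, hx, rfl⟩ := mem_smul_finset.1 hy
  exact e.extendSubtype_mem x hx

theorem card_filter_smul_finset_eq {s t : Finset α} (h : #s = #t) (P : Finset α → Prop)
    [DecidablePred P] : #{π : Perm α | P (π • s)} = #{π : Perm α | P (π • t)} := by
  obtain ⟨τ, rfl⟩ := exists_smul_finset_eq h.symm
  exact card_equiv (Equiv.mulRight τ) fun π => by simp [mul_smul]

/-- A uniformly random permutation moves a fixed `n`-set to a uniformly random `n`-set. -/
theorem card_filter_smul_finset_mul_card_powersetCard {n : ℕ} {s : Finset α} (hs : #s = n)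
    (P : Finset α → Prop) [DecidablePred P] :
    #{π : Perm α | P (π • s)} * #(powersetCard n (univ : Finset α))
      = #{H ∈ powersetCard n univ | P H} * Fintype.card (Perm α) := by
  set K := powersetCard n (univ : Finset α)
  have hK : ∀ π : Perm α, #{H ∈ K | P (π • H)} = #{H ∈ K | P H} := fun π =>
    card_equiv (MulAction.toPerm π) fun H => by simp [K, card_smul_finset]
  calc #{π : Perm α | P (π • s)} * #K
      = ∑ H ∈ K, #{π : Perm α | P (π • H)} := by
        rw [sum_congr rfl fun H hH => card_filter_smul_finset_eq (s := H)
          ((mem_powersetCard_univ.1 hH).trans hs.symm) P, sum_const, smul_eq_mul, mul_comm]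
    _ = ∑ π : Perm α, #{H ∈ K | P (π • H)} := by
        simp only [card_filter]; exact sum_comm
    _ = #{H ∈ K | P H} * Fintype.card (Perm α) := by
        simp only [hK, sum_const, card_univ, smul_eq_mul, mul_comm]

end Equiv.Perm

namespace Real

theorem exp_add_exp_le_of_abs_sub_le {x y c : ℝ} (h : |x - y| ≤ c) :
    exp x + exp y ≤ 2 * exp ((x + y) / 2 + c ^ 2 / 8) := by
  have hsq : ((x - y) / 2) ^ 2 / 2 ≤ c ^ 2 / 8 := by
    have := sq_le_sq' (abs_le.1 h).1 (abs_le.1 h).2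
    linarith
  have hx : exp x = exp ((x + y) / 2) * exp ((x - y) / 2) := by rw [← exp_add]; ring_nf
  have hy : exp y = exp ((x + y) / 2) * exp (-((x - y) / 2)) := by rw [← exp_add]; ring_nf
  calc exp x + exp y = 2 * exp ((x + y) / 2) * cosh ((x - y) / 2) := by
        rw [cosh_eq, hx, hy]; ring
    _ ≤ 2 * exp ((x + y) / 2) * exp (c ^ 2 / 8) := by
        gcongr; exact (cosh_le_exp_half_sq _).trans (exp_le_exp.2 hsq)
    _ = 2 * exp ((x + y) / 2 + c ^ 2 / 8) := by rw [mul_assoc, ← exp_add]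

end Real

open Real in
/-- Hoeffding's lemma for a sum of independent fair choices, one from each pair
`u (i, false), u (i, true)`. -/
theorem sum_exp_mul_sum_pair_choice_le {n : ℕ} (u : Fin n × Bool → ℝ) (hu : ∑ p, u p = 0) {c : ℝ}
    (hc : ∀ i, |u (i, true) - u (i, false)| ≤ c) (l : ℝ) :
    ∑ σ : Fin n → Bool, exp (l * ∑ i, u (i, σ i)) ≤ 2 ^ n * exp (n * l ^ 2 * c ^ 2 / 8) := by
  have hpair (i : Fin n) : ∑ b, exp (l * u (i, b))
      ≤ 2 * exp (l * (u (i, true) + u (i, false)) / 2 + (|l| * c) ^ 2 / 8) := by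
    rw [Fintype.sum_bool, mul_add]
    refine exp_add_exp_le_of_abs_sub_le ?_
    rw [← mul_sub, abs_mul]
    exact mul_le_mul_of_nonneg_left (hc i) (abs_nonneg l)
  have hu' : ∑ i, (u (i, true) + u (i, false)) = 0 := by
    simpa [Fintype.sum_prod_type, add_comm] using hu
  calc ∑ σ : Fin n → Bool, exp (l * ∑ i, u (i, σ i))
      = ∏ i, ∑ b, exp (l * u (i, b)) := by
        rw [Fintype.prod_sum]; simp only [mul_sum, exp_sum]
    _ ≤ ∏ i, 2 * exp (l * (u (i, true) + u (i, false)) / 2 + (|l| * c) ^ 2 / 8) :=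
        prod_le_prod (fun i _ => by positivity) fun i _ => hpair i
    _ = 2 ^ n * exp (n * l ^ 2 * c ^ 2 / 8) := by
        rw [prod_mul_distrib, prod_const, card_univ, Fintype.card_fin, ← exp_sum,
          sum_add_distrib, ← sum_div, ← mul_sum, hu', sum_const, card_univ, Fintype.card_fin,
          nsmul_eq_mul, mul_pow, sq_abs]
        ring_nf

theorem card_filter_le_mul_exp_le_sum_exp {ι : Type*} (s : Finset ι) (f : ι → ℝ) (a : ℝ)
    {l : ℝ} (hl : 0 ≤ l) :
    #{x ∈ s | a ≤ f x} * Real.exp (l * a) ≤ ∑ x ∈ s, Real.exp (l * f x) := by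
  calc #{x ∈ s | a ≤ f x} * Real.exp (l * a)
      ≤ ∑ x ∈ s with a ≤ f x, Real.exp (l * f x) := by
        rw [← nsmul_eq_mul]
        exact card_nsmul_le_sum _ _ _ fun x hx =>
          Real.exp_le_exp.2 (mul_le_mul_of_nonneg_left (mem_filter.1 hx).2 hl)
    _ ≤ ∑ x ∈ s, Real.exp (l * f x) :=
        sum_le_sum_of_subset_of_nonneg (filter_subset _ _) fun _ _ _ => (Real.exp_pos _).le

def flipPairs {n : ℕ} (σ : Fin n → Bool) : Equiv.Perm (Fin n × Bool) :=
  Function.Involutive.toPerm (fun p => (p.1, xor (σ p.1) p.2)) fun p => by simp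

@[simp]
theorem flipPairs_apply {n : ℕ} (σ : Fin n → Bool) (i : Fin n) (b : Bool) :
    flipPairs σ (i, b) = (i, xor (σ i) b) := rfl

section Hoeffding

variable {α : Type*} [Fintype α] [DecidableEq α] {n : ℕ} {t : α → ℝ} {c : ℝ}

/-- Precomposing `π` with a flip along the pairing `e` is a bijection of `Perm α`, so the
moment generating function may first be averaged over all `2 ^ n` flips. -/
theorem sum_perm_exp_mul_sum_le (e : Fin n × Bool ≃ α) (ht : ∑ x, t x = 0)
    (hc : ∀ x y, t x - t y ≤ c) (l : ℝ) :
    ∑ π : Equiv.Perm α, Real.exp (l * ∑ i, t (π (e (i, false))))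
      ≤ Fintype.card (Equiv.Perm α) * Real.exp (n * l ^ 2 * c ^ 2 / 8) := by
  set S := ∑ π : Equiv.Perm α, Real.exp (l * ∑ i, t (π (e (i, false))))
  have hflip (σ : Fin n → Bool) :
      S = ∑ π : Equiv.Perm α, Real.exp (l * ∑ i, t (π (e (i, σ i)))) :=
    (Fintype.sum_equiv (Equiv.mulRight (e.permCongr (flipPairs σ))) _ _ fun π => by
      simp).symm
  have hpair (π : Equiv.Perm α) :
      ∑ σ : Fin n → Bool, Real.exp (l * ∑ i, t (π (e (i, σ i))))
        ≤ 2 ^ n * Real.exp (n * l ^ 2 * c ^ 2 / 8) :=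
    sum_exp_mul_sum_pair_choice_le (fun p => t (π (e p)))
      ((Equiv.sum_comp (e.trans π) t).trans ht)
      (fun i => abs_sub_le_iff.2 ⟨hc _ _, hc _ _⟩) l
  have h2n : (0 : ℝ) < 2 ^ n := by positivity
  refine le_of_mul_le_mul_left ?_ h2n
  calc 2 ^ n * S = ∑ σ : Fin n → Bool, S := by simp
    _ = ∑ π : Equiv.Perm α, ∑ σ : Fin n → Bool, Real.exp (l * ∑ i, t (π (e (i, σ i)))) := by
        exact (sum_congr rfl fun σ _ => hflip σ).trans sum_comm
    _ ≤ ∑ _π : Equiv.Perm α, 2 ^ n * Real.exp (n * l ^ 2 * c ^ 2 / 8) :=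
        sum_le_sum fun π _ => hpair π
    _ = 2 ^ n * (Fintype.card (Equiv.Perm α) * Real.exp (n * l ^ 2 * c ^ 2 / 8)) := by
        rw [sum_const, card_univ, nsmul_eq_mul]; ring

theorem card_perm_filter_le_sum_le (e : Fin n × Bool ≃ α) (ht : ∑ x, t x = 0)
    (hc : ∀ x y, t x - t y ≤ c) (hn : 0 < n) (hc0 : 0 < c) {a : ℝ} (ha : 0 ≤ a) :
    #{π : Equiv.Perm α | a ≤ ∑ i, t (π (e (i, false)))}
      ≤ Real.exp (-(2 * a ^ 2 / (n * c ^ 2))) * Fintype.card (Equiv.Perm α) := by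
  -- the Chernoff bound with the optimal parameter `l = 4 a / (n c ^ 2)`
  set l := 4 * a / (n * c ^ 2)
  have hexp : n * l ^ 2 * c ^ 2 / 8 - l * a = -(2 * a ^ 2 / (n * c ^ 2)) := by
    simp only [l]; field_simp; ring
  have hmarkov := (card_filter_le_mul_exp_le_sum_exp univ
    (fun π : Equiv.Perm α => ∑ i, t (π (e (i, false)))) a (by positivity)).trans
    (sum_perm_exp_mul_sum_le e ht hc l)
  rw [← hexp, Real.exp_sub, div_mul_eq_mul_div, le_div_iff₀ (Real.exp_pos _)]
  linarith

/-- Hoeffding's inequality for the sum over a uniformly random half of a zero-sum family. -/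
theorem card_powersetCard_filter_le_sum_le (hα : Fintype.card α = 2 * n) (ht : ∑ x, t x = 0)
    (hc : ∀ x y, t x - t y ≤ c) (hn : 0 < n) (hc0 : 0 < c) {a : ℝ} (ha : 0 ≤ a) :
    #{H ∈ powersetCard n univ | a ≤ ∑ x ∈ H, t x}
      ≤ Real.exp (-(2 * a ^ 2 / (n * c ^ 2))) * #(powersetCard n (univ : Finset α)) := by
  let e : Fin n × Bool ≃ α := Fintype.equivOfCardEq (by simp [hα, mul_comm])
  let F : Finset α := univ.map ⟨fun i => e (i, false), fun i j h => by simpa using h⟩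
  have hsum (π : Equiv.Perm α) : ∑ x ∈ π • F, t x = ∑ i, t (π (e (i, false))) := by
    rw [smul_finset_def, sum_image fun x _ y _ h => smul_left_cancel π h, sum_map]; rfl
  have hcount := Equiv.Perm.card_filter_smul_finset_mul_card_powersetCard (n := n) (s := F)
    (by simp [F]) (fun H => a ≤ ∑ x ∈ H, t x)
  simp only [hsum] at hcount
  have hcard : (0 : ℝ) < Fintype.card (Equiv.Perm α) := by exact_mod_cast Fintype.card_pos
  refine le_of_mul_le_mul_right ?_ hcard
  calc (#{H ∈ powersetCard n univ | a ≤ ∑ x ∈ H, t x} : ℝ) * Fintype.card (Equiv.Perm α)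
      = #{π : Equiv.Perm α | a ≤ ∑ i, t (π (e (i, false)))} * #(powersetCard n univ) := by
        exact_mod_cast hcount.symm
    _ ≤ Real.exp (-(2 * a ^ 2 / (n * c ^ 2))) * Fintype.card (Equiv.Perm α)
          * #(powersetCard n (univ : Finset α)) := by
        gcongr; exact card_perm_filter_le_sum_le e ht hc hn hc0 ha
    _ = _ := by ring

end Hoeffding

namespace Real

theorem abs_log_le_of_abs_sub_one_le {r v : ℝ} (h : |r - 1| ≤ 1 - exp (-v)) : |log r| ≤ v := by
  obtain ⟨hlo, hhi⟩ := abs_le.1 h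
  have hr : 0 < r := by linarith [exp_pos (-v)]
  have hexp : 2 - exp (-v) ≤ exp v := by linarith [add_one_le_exp v, add_one_le_exp (-v)]
  refine abs_le.2 ⟨(le_log_iff_exp_le hr).2 (by linarith), (log_le_iff_le_exp hr).2 (by linarith)⟩

theorem div_two_le_one_sub_exp_neg {v : ℝ} (h0 : 0 ≤ v) (h1 : v ≤ 1) : v / 2 ≤ 1 - exp (-v) := by
  have hinv : exp (-v) ≤ (1 + v)⁻¹ := by
    rw [exp_neg]; exact inv_anti₀ (by linarith) (by linarith [add_one_le_exp v])
  have : (1 + v)⁻¹ ≤ 1 - v / 2 := by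
    rw [inv_le_iff_one_le_mul₀ (by linarith)]; nlinarith
  linarith

theorem exp_sub_exp_neg_le_exp_two_mul_sub_one {ε : ℝ} (h : 0 ≤ ε) :
    exp ε - exp (-ε) ≤ exp (2 * ε) - 1 := by
  have hfac : exp (2 * ε) - 1 = exp ε * (exp ε - exp (-ε)) := by
    rw [mul_sub, ← exp_add, ← exp_add, add_neg_cancel, exp_zero, two_mul]
  have hpos : 0 ≤ exp ε - exp (-ε) := by
    linarith [exp_le_exp.2 (show -ε ≤ ε by linarith)]
  rw [hfac]
  exact le_mul_of_one_le_left hpos (one_le_exp h)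

end Real

section Privacy

variable {Y : Type*} {d : ℕ} {R : Fin d → Y → ℝ} {ε : ℝ}

theorem le_exp_mul_probU_univ (hpriv : ∀ x x' y, R x y ≤ Real.exp ε * R x' y) (x : Fin d)
    (y : Y) : R x y ≤ Real.exp ε * probU R univ y := by
  have hd : (0 : ℝ) < d := by exact_mod_cast x.pos
  rw [probU, card_univ, Fintype.card_fin, mul_div_assoc', le_div_iff₀ hd, mul_sum]
  calc R x y * d = ∑ _x' : Fin d, R x y := by simp [mul_comm]
    _ ≤ ∑ x', Real.exp ε * R x' y := sum_le_sum fun x' _ => hpriv x x' y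

theorem probU_univ_le_exp_mul (hpriv : ∀ x x' y, R x y ≤ Real.exp ε * R x' y) (x : Fin d)
    (y : Y) : probU R univ y ≤ Real.exp ε * R x y := by
  have hd : (0 : ℝ) < d := by exact_mod_cast x.pos
  rw [probU, card_univ, Fintype.card_fin, div_le_iff₀ hd]
  calc ∑ x', R x' y ≤ ∑ _x' : Fin d, Real.exp ε * R x y := sum_le_sum fun x' _ => hpriv x' x y
    _ = Real.exp ε * R x y * d := by simp [mul_comm]

noncomputable def centeredRatio (R : Fin d → Y → ℝ) (y : Y) (x : Fin d) : ℝ :=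
  R x y / probU R univ y - 1

theorem sum_centeredRatio {y : Y} (hA : probU R univ y ≠ 0) : ∑ x, centeredRatio R y x = 0 := by
  have hS : ∑ x, R x y ≠ 0 := fun h => hA (by simp [probU, h])
  have hd : (d : ℝ) ≠ 0 := by rintro h; simp_all [probU]
  simp only [centeredRatio, probU, sum_sub_distrib, ← sum_div, card_univ, Fintype.card_fin]
  field_simp
  simp

theorem centeredRatio_sub_le (hpriv : ∀ x x' y, R x y ≤ Real.exp ε * R x' y) {y : Y}
    (hA : 0 < probU R univ y) (x x' : Fin d) :
    centeredRatio R y x - centeredRatio R y x' ≤ Real.exp ε - Real.exp (-ε) := by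
  have hlo : Real.exp (-ε) * probU R univ y ≤ R x' y := by
    have := mul_le_mul_of_nonneg_left (probU_univ_le_exp_mul hpriv x' y) (Real.exp_pos (-ε)).le
    rwa [← mul_assoc, ← Real.exp_add, neg_add_cancel, Real.exp_zero, one_mul] at this
  have hhi := le_exp_mul_probU_univ hpriv x y
  rw [centeredRatio, centeredRatio, sub_sub_sub_cancel_right, ← sub_div, div_le_iff₀ hA, sub_mul]
  linarith

theorem probU_div_probU_univ {H : Finset (Fin d)} (hH : H.Nonempty) {y : Y}
    (hA : probU R univ y ≠ 0) :
    probU R H y / probU R univ y = 1 + (∑ x ∈ H, centeredRatio R y x) / #H := by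
  have hH' : (#H : ℝ) ≠ 0 := by exact_mod_cast hH.card_pos.ne'
  simp only [centeredRatio]
  rw [sum_sub_distrib, ← sum_div, sum_const, nsmul_one, probU]
  field_simp
  ring

theorem not_leaky_of_probU_univ_eq_zero {H : Finset (Fin d)} {v : ℝ} {y : Y} (hv : 0 ≤ v)
    (hA : probU R univ y = 0) : ¬ leaky R H v y := by
  simp [leaky, hA, hv]

theorem lt_abs_sum_centeredRatio_of_leaky {H : Finset (Fin d)} (hH : H.Nonempty) {v : ℝ} {y : Y}
    (hA : probU R univ y ≠ 0) (hl : leaky R H v y) :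
    #H * (1 - Real.exp (-v)) < |∑ x ∈ H, centeredRatio R y x| := by
  by_contra! hle
  refine hl.not_ge (Real.abs_log_le_of_abs_sub_one_le ?_)
  rw [probU_div_probU_univ hH hA, add_sub_cancel_left, abs_div, Nat.abs_cast,
    div_le_iff₀ (by exact_mod_cast hH.card_pos), mul_comm]
  exact hle

end Privacy

theorem card_filter_leaky_le {Y : Type*} {d n : ℕ} (hd : d = 2 * n) (hn : 0 < n) {ε v : ℝ}
    (hε : 0 < ε) (hv : 0 ≤ v) {R : Fin d → Y → ℝ} (hR0 : ∀ x y, 0 ≤ R x y)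
    (hpriv : ∀ x x' y, R x y ≤ Real.exp ε * R x' y) (y : Y) :
    #{H ∈ powersetCard n univ | leaky R H v y}
      ≤ 2 * Real.exp (-(2 * (n * (1 - Real.exp (-v))) ^ 2
          / (n * (Real.exp ε - Real.exp (-ε)) ^ 2))) * #(powersetCard n (univ : Finset (Fin d))) := by
  set K := powersetCard n (univ : Finset (Fin d))
  set a := n * (1 - Real.exp (-v))
  set t := centeredRatio R y
  have hA0 : 0 ≤ probU R univ y := div_nonneg (sum_nonneg fun x _ => hR0 x y) (Nat.cast_nonneg _)
  rcases hA0.eq_or_lt with hA | hA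
  · rw [filter_false_of_mem fun H _ => not_leaky_of_probU_univ_eq_zero hv hA.symm, card_empty,
      Nat.cast_zero]
    positivity
  have hα : Fintype.card (Fin d) = 2 * n := by simp [hd]
  have hc0 : 0 < Real.exp ε - Real.exp (-ε) := by
    linarith [Real.exp_lt_exp.2 (show -ε < ε by linarith)]
  have ha : 0 ≤ a := mul_nonneg n.cast_nonneg (by linarith [Real.exp_le_one_iff.2 (neg_nonpos.2 hv)])
  have hsplit : {H ∈ K | leaky R H v y}
      ⊆ {H ∈ K | a ≤ ∑ x ∈ H, t x} ∪ {H ∈ K | a ≤ ∑ x ∈ H, -t x} := by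
    intro H hH
    obtain ⟨hK, hl⟩ := mem_filter.1 hH
    have hHn : #H = n := mem_powersetCard_univ.1 hK
    have hgt := lt_abs_sum_centeredRatio_of_leaky (card_pos.1 (hHn ▸ hn)) hA.ne' hl
    rw [hHn, lt_abs, ← sum_neg_distrib] at hgt
    rcases hgt with h | h
    · exact mem_union_left _ (mem_filter.2 ⟨hK, h.le⟩)
    · exact mem_union_right _ (mem_filter.2 ⟨hK, h.le⟩)
  calc (#{H ∈ K | leaky R H v y} : ℝ)
      ≤ #{H ∈ K | a ≤ ∑ x ∈ H, t x} + #{H ∈ K | a ≤ ∑ x ∈ H, -t x} := by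
        exact_mod_cast (card_le_card hsplit).trans (card_union_le _ _)
    _ ≤ _ := by
        rw [two_mul, add_mul]
        gcongr
        · exact card_powersetCard_filter_le_sum_le hα (sum_centeredRatio hA.ne')
            (centeredRatio_sub_le hpriv hA) hn hc0 ha
        · exact card_powersetCard_filter_le_sum_le hα (by simp [t, sum_centeredRatio hA.ne'])
            (fun x x' => by linarith [centeredRatio_sub_le hpriv hA x' x]) hn hc0 ha

theorem two_mul_exp_neg_le {ε β v : ℝ} {d n : ℕ} (hε : 0 < ε) (hβ0 : 0 < β) (hβ1 : β < 1)
    (hd : (d : ℝ) = 2 * n) (hn : 0 < n)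
    (hd2 : 4 * (Real.exp (2 * ε) - 1) ^ 2 * Real.log (2 / β) < d)
    (hv : v = (Real.exp (2 * ε) - 1) * √(4 / d * Real.log (2 / β))) :
    2 * Real.exp (-(2 * (n * (1 - Real.exp (-v))) ^ 2 / (n * (Real.exp ε - Real.exp (-ε)) ^ 2)))
      ≤ β := by
  set L := Real.log (2 / β)
  set r := Real.exp (2 * ε) - 1
  set c := Real.exp ε - Real.exp (-ε)
  set s := 1 - Real.exp (-v)
  have hL : 0 < L := Real.log_pos (by rw [lt_div_iff₀ hβ0]; linarith)
  have hc : 0 < c := by linarith [Real.exp_lt_exp.2 (show -ε < ε by linarith)]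
  have hcr : c ≤ r := Real.exp_sub_exp_neg_le_exp_two_mul_sub_one hε.le
  have hr : 0 < r := hc.trans_le hcr
  have hn' : (0 : ℝ) < n := by exact_mod_cast hn
  have hv0 : 0 ≤ v := hv ▸ mul_nonneg (hc.le.trans hcr) (Real.sqrt_nonneg _)
  have hv2 : v ^ 2 = r ^ 2 * (4 / d * L) := by
    rw [hv, mul_pow, Real.sq_sqrt (by rw [hd]; positivity)]
  have hv1 : v ≤ 1 := by
    have : v ^ 2 < 1 := by
      rw [hv2, show r ^ 2 * (4 / d * L) = 4 * r ^ 2 * L / d by ring,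
        div_lt_one (by rw [hd]; positivity)]
      exact hd2
    nlinarith
  have hs : v / 2 ≤ s := Real.div_two_le_one_sub_exp_neg hv0 hv1
  have hLs : L ≤ 2 * (n * s) ^ 2 / (n * c ^ 2) :=
    calc L = n * v ^ 2 / (2 * r ^ 2) := by
          rw [hv2, hd]; field_simp; norm_num
      _ ≤ n * (2 * s) ^ 2 / (2 * c ^ 2) := by gcongr; linarith
      _ = 2 * (n * s) ^ 2 / (n * c ^ 2) := by field_simp
  calc 2 * Real.exp (-(2 * (n * s) ^ 2 / (n * c ^ 2))) ≤ 2 * Real.exp (-L) := by gcongr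
    _ = β := by rw [Real.exp_neg, Real.exp_log (by positivity)]; field_simp

theorem stmt_3_general {Y : Type*} (ε β : ℝ) (d : ℕ)
    (hε : 0 < ε) (hβ : β ∈ Set.Ioo (0 : ℝ) 1) (hd : Even d)
    (hd2 : 4 * (Real.exp (2 * ε) - 1) ^ 2 * Real.log (2 / β) < (d : ℝ))
    (R : Fin d → Y → ℝ)
    (hR0 : ∀ x y, 0 ≤ R x y)
    (hpriv : ∀ x x' y, R x y ≤ Real.exp ε * R x' y)
    (y : Y) :
    1 - β ≤
      (((Finset.powersetCard (d / 2) (Finset.univ : Finset (Fin d))).filter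
          (fun H => ¬ leaky R H
            ((Real.exp (2 * ε) - 1) * Real.sqrt (4 / (d : ℝ) * Real.log (2 / β))) y)).card : ℝ)
        / ((Finset.powersetCard (d / 2) (Finset.univ : Finset (Fin d))).card : ℝ) := by
  obtain ⟨hβ0, hβ1⟩ := hβ
  obtain ⟨n, hdn⟩ := hd.exists_two_nsmul
  rw [smul_eq_mul] at hdn
  have hd' : (d : ℝ) = 2 * n := by exact_mod_cast hdn
  have hn : 0 < n := by
    have hL : 0 < Real.log (2 / β) := Real.log_pos (by rw [lt_div_iff₀ hβ0]; linarith)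
    have : (0 : ℝ) < d := lt_of_le_of_lt (by positivity) hd2
    exact (Nat.cast_pos (α := ℝ)).1 (by linarith)
  rw [show d / 2 = n by omega]
  set v := (Real.exp (2 * ε) - 1) * √(4 / d * Real.log (2 / β))
  set K := powersetCard n (univ : Finset (Fin d))
  have hK : (0 : ℝ) < #K := by
    rw [card_powersetCard, card_univ, Fintype.card_fin]
    exact_mod_cast Nat.choose_pos (by omega)
  have hbad : (#{H ∈ K | leaky R H v y} : ℝ) ≤ β * #K :=
    (card_filter_leaky_le hdn hn hε
      (mul_nonneg (sub_nonneg.2 (Real.one_le_exp (by positivity))) (Real.sqrt_nonneg _))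
      hR0 hpriv y).trans
      (mul_le_mul_of_nonneg_right (two_mul_exp_neg_le hε hβ0 hβ1 hd' hn hd2 rfl) (by positivity))
  rw [le_div_iff₀ hK, filter_not, card_sdiff_of_subset (filter_subset _ _),
    Nat.cast_sub (card_le_card (filter_subset _ _))]
  linarith

/-- for `ε > 0`, `β ∈ (0,1)`, even `d > 4(e^{2ε}-1)² ln(2/β)`,
an `ε`-private randomizer `R : [d] → 𝒴` with `𝒴` countable, and a fixed message `y`:
if `H` is uniform among size-`d/2` subsets of `[d]`, then with probability at least
`1-β` over `H`, `y` is not `(e^{2ε}-1)√((4/d) ln(2/β))`-leaky w.r.t. `H, R`. -/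
theorem stmt_3 {Y : Type*} [Countable Y] (ε β : ℝ) (d : ℕ)
    (hε : 0 < ε) (hβ : β ∈ Set.Ioo (0 : ℝ) 1) (hd : Even d)
    (hd2 : 4 * (Real.exp (2 * ε) - 1) ^ 2 * Real.log (2 / β) < (d : ℝ))
    (R : Fin d → Y → ℝ)
    (hR0 : ∀ x y, 0 ≤ R x y) (hR1 : ∀ x, ∑' y, R x y = 1)
    (hpriv : ∀ x x' y, R x y ≤ Real.exp ε * R x' y)
    (y : Y) :
    1 - β ≤
      (((Finset.powersetCard (d / 2) (Finset.univ : Finset (Fin d))).filter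
          (fun H => ¬ leaky R H
            ((Real.exp (2 * ε) - 1) * Real.sqrt (4 / (d : ℝ) * Real.log (2 / β))) y)).card : ℝ)
        / ((Finset.powersetCard (d / 2) (Finset.univ : Finset (Fin d))).card : ℝ) :=
  stmt_3_general ε β d hε hβ hd hd2 R hR0 hpriv y
end

section
/- Fix ε > 0, a vector R⃗ = (R_1,…,R_n) of ε-private randomizers from [d] to a finite message set 𝒴, and an even integer d > 4(e^{2ε}−1)²·ln(12·|𝒴|·|R⃗|_≠), where |R⃗|_≠ is the number of distinct randomizers among R_1,…,R_n. If H is chosen uniformly at random among subsets of [d] of size d/2, then with probability at least 5/6 over the choice of H: for every y ∈ 𝒴 and every i ∈ [n], the message y is not v-leaky with respect to H and R_i, where v = (e^{2ε}−1)·√((4/d)·ln(12·|𝒴|·|R⃗|_≠)). -/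
open scoped Classical

/-!
Pair up the `2k` points of `[d]` by a bijection `e : [d] ≃ [k] × Bool` and keep one point of
each pair according to a sign vector `s : [k] → Bool`. For a uniform pairing and uniform signs
this transversal is a uniform `k`-subset: permutations of `[d]` act transitively on `k`-subsets
and compatibly on pairings, so all fibres have the same size. For a fixed pairing, the mass that
a randomizer gives to a message `y` on the transversal is its mean plus a Rademacher sum
`∑ ±δⱼ`, and `ε`-privacy bounds `|δⱼ| ≤ (e^ε - 1) · mean / 2`. Hoeffding's inequality then
bounds the probability that `y` is `v`-leaky by `2 exp (-k v² / (2 (e^ε - 1)²))`, which for the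
given `v` is at most `1 / (6 |𝒴| |R|_≠)`; a union bound over messages and distinct randomizers
concludes.
-/

open Finset Real
open scoped Pointwise

section Hoeffding

variable {ι : Type*} [Fintype ι]

def signedSum (δ : ι → ℝ) (s : ι → Bool) : ℝ :=
  ∑ j, if s j then δ j else -δ j

lemma sum_exp_mul_signedSum_le (δ : ι → ℝ) (l : ℝ) :
    ∑ s, exp (l * signedSum δ s) ≤ 2 ^ Fintype.card ι * exp (l ^ 2 * ∑ j, δ j ^ 2 / 2) := by
  have hprod : ∑ s, exp (l * signedSum δ s) = ∏ j, 2 * cosh (l * δ j) := by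
    simp_rw [signedSum, mul_sum, exp_sum]
    rw [← Fintype.prod_sum (fun j (b : Bool) => exp (l * if b then δ j else -δ j))]
    refine prod_congr rfl fun j _ => ?_
    rw [Fintype.sum_bool, cosh_eq]
    simp only [if_true, Bool.false_eq_true, if_false, mul_neg]
    ring
  calc ∑ s, exp (l * signedSum δ s) = ∏ j, 2 * cosh (l * δ j) := hprod
    _ ≤ ∏ j, 2 * exp ((l * δ j) ^ 2 / 2) := by
      gcongr with j
      exact cosh_le_exp_half_sq _
    _ = 2 ^ Fintype.card ι * exp (l ^ 2 * ∑ j, δ j ^ 2 / 2) := by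
      rw [prod_mul_distrib, prod_const, ← exp_sum, card_univ, mul_sum]
      simp only [mul_pow, mul_div_assoc]

lemma card_lt_signedSum_le (δ : ι → ℝ) {t B : ℝ} (ht : 0 ≤ t) (hB : 0 < B)
    (hδ : ∑ j, δ j ^ 2 ≤ B) :
    (#{s | t < signedSum δ s} : ℝ) ≤ exp (-t ^ 2 / (2 * B)) * 2 ^ Fintype.card ι := by
  set l := t / B with hl_def
  have hl : 0 ≤ l := div_nonneg ht hB.le
  have hmarkov : (#{s | t < signedSum δ s} : ℝ) * exp (l * t)
      ≤ ∑ s, exp (l * signedSum δ s) :=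
    calc (#{s | t < signedSum δ s} : ℝ) * exp (l * t)
        ≤ ∑ s ∈ {s | t < signedSum δ s}, exp (l * signedSum δ s) := by
          rw [← nsmul_eq_mul]
          exact card_nsmul_le_sum _ _ _ fun s hs =>
            exp_le_exp.2 (mul_le_mul_of_nonneg_left (mem_filter.1 hs).2.le hl)
      _ ≤ ∑ s, exp (l * signedSum δ s) :=
          sum_le_sum_of_subset_of_nonneg (filter_subset _ _) fun _ _ _ => (exp_pos _).le
  have hmgf : ∑ s, exp (l * signedSum δ s) ≤ 2 ^ Fintype.card ι * exp (l ^ 2 * (B / 2)) := by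
    grw [sum_exp_mul_signedSum_le, ← sum_div, hδ]
  have hexp : exp (l ^ 2 * (B / 2)) = exp (-t ^ 2 / (2 * B)) * exp (l * t) := by
    rw [← exp_add, hl_def]
    congr 1
    field_simp
    ring
  rw [hexp, ← mul_assoc] at hmgf
  exact le_of_mul_le_mul_right ((hmarkov.trans hmgf).trans_eq (by ring)) (exp_pos _)

lemma card_lt_abs_signedSum_le (δ : ι → ℝ) {t B : ℝ} (ht : 0 ≤ t) (hB : 0 < B)
    (hδ : ∑ j, δ j ^ 2 ≤ B) :
    (#{s | t < |signedSum δ s|} : ℝ) ≤ 2 * exp (-t ^ 2 / (2 * B)) * 2 ^ Fintype.card ι := by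
  have hneg : ∀ s, signedSum (-δ) s = -signedSum δ s := fun s => by
    simp only [signedSum, ← sum_neg_distrib]
    exact sum_congr rfl fun j _ => by cases s j <;> simp
  have hsplit : (#{s | t < |signedSum δ s|} : ℝ)
      ≤ #{s | t < signedSum δ s} + #{s | t < signedSum (-δ) s} := by
    simp only [lt_abs, hneg, filter_or]
    exact_mod_cast card_union_le _ _
  have htail := card_lt_signedSum_le δ ht hB hδ
  have htail' := card_lt_signedSum_le (-δ) ht hB (by simpa using hδ)
  linarith

end Hoeffding

section Pairing

lemma symm_section_injective {α ι : Type*} (e : α ≃ ι × Bool) (s : ι → Bool) :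
    Function.Injective fun j => e.symm (j, s j) :=
  fun _ _ h => congrArg Prod.fst (e.symm.injective h)

noncomputable def pairHalfDiff {α ι : Type*} (e : α ≃ ι × Bool) (c : α → ℝ) (j : ι) : ℝ :=
  (c (e.symm (j, true)) - c (e.symm (j, false))) / 2

variable {α ι : Type*} [DecidableEq α] [Fintype ι]

def pairTransversal (e : α ≃ ι × Bool) (s : ι → Bool) : Finset α :=
  univ.image fun j => e.symm (j, s j)

lemma mem_pairTransversal {e : α ≃ ι × Bool} {s : ι → Bool} {x : α} :
    x ∈ pairTransversal e s ↔ (e x).2 = s (e x).1 := by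
  simp only [pairTransversal, mem_image, mem_univ, true_and, Equiv.symm_apply_eq]
  constructor
  · rintro ⟨j, hj⟩
    rw [← hj]
  · intro h
    exact ⟨(e x).1, by rw [← h]⟩

lemma card_pairTransversal (e : α ≃ ι × Bool) (s : ι → Bool) :
    #(pairTransversal e s) = Fintype.card ι := by
  rw [pairTransversal, card_image_of_injective _ (symm_section_injective e s), card_univ]

lemma sum_pairTransversal [Fintype α] (e : α ≃ ι × Bool) (s : ι → Bool) (c : α → ℝ) :
    ∑ x ∈ pairTransversal e s, c x = (∑ x, c x) / 2 + signedSum (pairHalfDiff e c) s := by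
  have hsum : ∑ x, c x = ∑ j, (c (e.symm (j, true)) + c (e.symm (j, false))) := by
    rw [← e.symm.sum_comp, Fintype.sum_prod_type]
    simp only [Fintype.sum_bool]
  rw [pairTransversal, sum_image fun i _ j _ h => symm_section_injective e s h, hsum, sum_div,
    signedSum, ← sum_add_distrib]
  refine sum_congr rfl fun j _ => ?_
  cases s j <;> simp only [pairHalfDiff, if_true, Bool.false_eq_true, if_false] <;> ring

lemma pairTransversal_perm (σ : Equiv.Perm α) (e : α ≃ ι × Bool) (s : ι → Bool) :
    pairTransversal (σ.symm.trans e) s = σ • pairTransversal e s := by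
  ext x
  rw [← inv_inv σ, mem_inv_smul_finset_iff, inv_inv]
  simp [mem_pairTransversal, Equiv.Perm.smul_def]

end Pairing

section Sampling

lemma card_filter_comp_mul_card_eq {A B : Type*} [Fintype A] [DecidableEq B] (f : A → B)
    (S : Finset B) (hf : ∀ a, f a ∈ S)
    (hfib : ∀ b ∈ S, ∀ b' ∈ S, #{a | f a = b} = #{a | f a = b'})
    (P : B → Prop) [DecidablePred P] :
    #{a | P (f a)} * #S = #{b ∈ S | P b} * Fintype.card A := by
  have hfiber : ∀ b ∈ S, #{a | f a = b} * #S = Fintype.card A := fun b hb => by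
    rw [← card_univ, card_eq_sum_card_fiberwise (s := univ) fun a _ => hf a,
      sum_congr rfl fun b' hb' => (hfib b hb b' hb').symm, sum_const, smul_eq_mul, mul_comm]
  rw [card_eq_sum_card_fiberwise (t := {b ∈ S | P b}) fun a ha =>
    mem_filter.2 ⟨hf a, (mem_filter.1 ha).2⟩, sum_mul, ← smul_eq_mul, ← sum_const]
  refine sum_congr rfl fun b hb => ?_
  rw [filter_filter, ← hfiber b (mem_filter.1 hb).1]
  congr 2
  ext a
  simp only [mem_filter, mem_univ, true_and, and_iff_right_iff_imp]
  exact fun h => h ▸ (mem_filter.1 hb).2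

variable {α ι : Type*} [Fintype α] [DecidableEq α] [Fintype ι]

lemma card_pairTransversal_fiber_eq {H H' : Finset α} (h : #H = #H') :
    #{p : (α ≃ ι × Bool) × (ι → Bool) | pairTransversal p.1 p.2 = H}
      = #{p : (α ≃ ι × Bool) × (ι → Bool) | pairTransversal p.1 p.2 = H'} := by
  have := Set.powersetCard.isPretransitive (α := α) (n := #H)
  obtain ⟨σ, hσ⟩ := MulAction.exists_smul_eq (Equiv.Perm α)
    (Set.powersetCard.ofCard rfl) (Set.powersetCard.ofCard h.symm)
  have hσH : σ • H = H' := congrArg Subtype.val hσ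
  refine card_equiv ((Equiv.equivCongr σ (Equiv.refl _)).prodCongr (Equiv.refl _)) fun p => ?_
  simp only [mem_filter, mem_univ, true_and]
  change _ ↔ pairTransversal (σ.symm.trans (p.1.trans (Equiv.refl _))) p.2 = H'
  rw [Equiv.trans_refl, pairTransversal_perm, ← hσH, smul_left_cancel_iff]

lemma card_filter_powersetCard_le (e₀ : α ≃ ι × Bool) (P : Finset α → Prop) [DecidablePred P]
    {β : ℝ}
    (hP : ∀ e : α ≃ ι × Bool, (#{s | P (pairTransversal e s)} : ℝ) ≤ β * 2 ^ Fintype.card ι) :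
    (#{H ∈ powersetCard (Fintype.card ι) univ | P H} : ℝ)
      ≤ β * #(powersetCard (Fintype.card ι) (univ : Finset α)) := by
  set Ω := powersetCard (Fintype.card ι) (univ : Finset α)
  set E := Fintype.card (α ≃ ι × Bool)
  have hcount := card_filter_comp_mul_card_eq (fun p : (α ≃ ι × Bool) × (ι → Bool) =>
      pairTransversal p.1 p.2) Ω
    (fun p => mem_powersetCard.2 ⟨subset_univ _, card_pairTransversal p.1 p.2⟩)
    (fun H hH H' hH' => card_pairTransversal_fiber_eq
      ((mem_powersetCard.1 hH).2.trans (mem_powersetCard.1 hH').2.symm)) P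
  have hsplit : #{p : (α ≃ ι × Bool) × (ι → Bool) | P (pairTransversal p.1 p.2)}
      = ∑ e : α ≃ ι × Bool, #{s | P (pairTransversal e s)} := by
    simp only [card_filter, Fintype.sum_prod_type]
  rw [hsplit, Fintype.card_prod, Fintype.card_fun, Fintype.card_bool] at hcount
  have hcountR : (#{H ∈ Ω | P H} : ℝ) * (E * 2 ^ Fintype.card ι)
      = (∑ e : α ≃ ι × Bool, #{s | P (pairTransversal e s)} : ℝ) * #Ω := by
    exact_mod_cast hcount.symm
  have hE : (0 : ℝ) < E := by exact_mod_cast Fintype.card_pos_iff.2 ⟨e₀⟩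
  refine le_of_mul_le_mul_right ?_ (mul_pos hE (pow_pos two_pos (Fintype.card ι)))
  calc (#{H ∈ Ω | P H} : ℝ) * (E * 2 ^ Fintype.card ι)
      = (∑ e : α ≃ ι × Bool, #{s | P (pairTransversal e s)} : ℝ) * #Ω := hcountR
    _ ≤ (∑ _e : α ≃ ι × Bool, β * 2 ^ Fintype.card ι) * #Ω := by gcongr with e; exact hP e
    _ = β * #Ω * (E * 2 ^ Fintype.card ι) := by
      rw [sum_const, card_univ, nsmul_eq_mul]
      ring

end Sampling

section Concentration

variable {α ι : Type*} [Fintype α] [Fintype ι] {ε : ℝ} {c : α → ℝ}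

lemma abs_sub_le_of_le_exp_mul (hε : 0 ≤ ε) (hc : ∀ x x', c x ≤ exp ε * c x') (a b : α) :
    |c a - c b| ≤ (exp ε - 1) * ((∑ x, c x) / Fintype.card α) := by
  obtain ⟨x₀, -, hx₀⟩ := exists_min_image univ c ⟨a, mem_univ a⟩
  have hmean : c x₀ ≤ (∑ x, c x) / Fintype.card α := by
    rw [le_div_iff₀ (by exact_mod_cast Fintype.card_pos_iff.2 ⟨a⟩), mul_comm, ← nsmul_eq_mul,
      ← card_univ]
    exact card_nsmul_le_sum _ _ _ fun x _ => hx₀ x (mem_univ x)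
  have he : 0 ≤ exp ε - 1 := by linarith [one_le_exp hε]
  have hmin : ∀ x y, c x - c y ≤ (exp ε - 1) * c x₀ := fun x y => by
    linarith [hc x x₀, hx₀ y (mem_univ y)]
  rw [abs_le]
  constructor <;> nlinarith [hmin a b, hmin b a]

lemma sum_sq_pairHalfDiff_le (hε : 0 ≤ ε) (hc : ∀ x x', c x ≤ exp ε * c x') (e : α ≃ ι × Bool) :
    ∑ j, pairHalfDiff e c j ^ 2
      ≤ Fintype.card ι * ((exp ε - 1) * ((∑ x, c x) / Fintype.card α) / 2) ^ 2 := by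
  calc ∑ j, pairHalfDiff e c j ^ 2
      ≤ ∑ _j : ι, ((exp ε - 1) * ((∑ x, c x) / Fintype.card α) / 2) ^ 2 := by
        refine sum_le_sum fun j _ => ?_
        rw [pairHalfDiff, ← sq_abs, abs_div, abs_two]
        gcongr
        exact abs_sub_le_of_le_exp_mul hε hc _ _
    _ = _ := by rw [sum_const, card_univ, nsmul_eq_mul]

variable [DecidableEq α]

lemma card_deviation_pairTransversal_le (hε : 0 < ε) (e : α ≃ ι × Bool) (hc0 : ∀ x, 0 ≤ c x)
    (hc : ∀ x x', c x ≤ exp ε * c x') {v : ℝ} (hv : 0 ≤ v) :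
    (#{s | (∑ x, c x) / Fintype.card α * v / 2 < |(∑ x ∈ pairTransversal e s, c x)
        / Fintype.card ι - (∑ x, c x) / Fintype.card α|} : ℝ)
      ≤ 2 * exp (-(Fintype.card ι * v ^ 2) / (2 * (exp ε - 1) ^ 2)) * 2 ^ Fintype.card ι := by
  rcases (sum_nonneg fun x _ => hc0 x).eq_or_lt with hT | hT
  · have hzero : ∀ x, c x = 0 := fun x =>
      (sum_eq_zero_iff_of_nonneg fun x _ => hc0 x).1 hT.symm x (mem_univ x)
    simp [hzero]
    positivity
  set k : ℝ := (Fintype.card ι : ℝ)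
  set μ := (∑ x, c x) / Fintype.card α
  have hα : (Fintype.card α : ℝ) = 2 * k := by
    rw [Fintype.card_congr e, Fintype.card_prod, Fintype.card_bool]
    push_cast
    ring
  have hk : 0 < k := by
    obtain ⟨x, -, -⟩ := exists_ne_zero_of_sum_ne_zero hT.ne'
    have : (0 : ℝ) < Fintype.card α := by exact_mod_cast Fintype.card_pos_iff.2 ⟨x⟩
    linarith
  have hμ : 0 < μ := div_pos hT (by rw [hα]; positivity)
  have hε1 : 0 < exp ε - 1 := by linarith [add_one_lt_exp hε.ne']
  have hsub : ({s | μ * v / 2 < |(∑ x ∈ pairTransversal e s, c x) / k - μ|} : Finset _)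
      ⊆ ({s | k * μ * v / 2 < |signedSum (pairHalfDiff e c) s|} : Finset _) := fun s hs => by
    have hdev : (∑ x ∈ pairTransversal e s, c x) / k - μ = signedSum (pairHalfDiff e c) s / k := by
      rw [sum_pairTransversal, show μ = (∑ x, c x) / (2 * k) by rw [← hα]]
      ring
    rw [mem_filter, hdev, abs_div, abs_of_pos hk, lt_div_iff₀ hk] at hs
    exact mem_filter.2 ⟨mem_univ s, by linarith [hs.2]⟩
  calc (#{s | μ * v / 2 < |(∑ x ∈ pairTransversal e s, c x) / k - μ|} : ℝ)
      ≤ #{s | k * μ * v / 2 < |signedSum (pairHalfDiff e c) s|} := by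
        exact_mod_cast card_le_card hsub
    _ ≤ 2 * exp (-(k * μ * v / 2) ^ 2 / (2 * (k * ((exp ε - 1) * μ / 2) ^ 2)))
          * 2 ^ Fintype.card ι :=
      card_lt_abs_signedSum_le _ (by positivity) (by positivity)
        (sum_sq_pairHalfDiff_le hε.le hc e)
    _ = 2 * exp (-(k * v ^ 2) / (2 * (exp ε - 1) ^ 2)) * 2 ^ Fintype.card ι := by
      congr 3
      field_simp

end Concentration

lemma abs_log_div_le_of_abs_sub_le {p q v : ℝ} (hp : 0 ≤ p) (hv0 : 0 ≤ v) (hv1 : v ≤ 1)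
    (h : |q - p| ≤ p * v / 2) : |log (q / p)| ≤ v := by
  rcases hp.eq_or_lt with rfl | hp
  · simpa using hv0
  rw [abs_le] at h ⊢
  have hq : 0 < q / p := div_pos (by nlinarith) hp
  constructor
  · have hpq : p / q ≤ 1 + v := by
      rw [div_le_iff₀ (by nlinarith)]
      nlinarith
    linarith [one_sub_inv_le_log_of_pos hq, inv_div q p]
  · have hqp : q / p ≤ 1 + v := by
      rw [div_le_iff₀ hp]
      nlinarith
    linarith [log_le_sub_one_of_pos hq]

section Leakage

variable {d : ℕ} {Y : Type*} {ε v : ℝ}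

lemma card_leaky_pairTransversal_le {ι : Type*} [Fintype ι] (hε : 0 < ε) (hv0 : 0 ≤ v)
    (hv1 : v ≤ 1) (Q : Fin d → Y → ℝ) (y : Y) (hQ0 : ∀ x, 0 ≤ Q x y)
    (hQ : ∀ x x', Q x y ≤ exp ε * Q x' y) (e : Fin d ≃ ι × Bool) :
    (#{s | leaky Q (pairTransversal e s) v y} : ℝ)
      ≤ 2 * exp (-(Fintype.card ι * v ^ 2) / (2 * (exp ε - 1) ^ 2)) * 2 ^ Fintype.card ι := by
  refine le_trans ?_ (card_deviation_pairTransversal_le hε e hQ0 hQ hv0)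
  refine Nat.cast_le.2 (card_le_card fun s hs => mem_filter.2 ⟨mem_univ s, ?_⟩)
  have hleak := (mem_filter.1 hs).2
  rw [leaky, probU, probU, card_pairTransversal, card_univ] at hleak
  by_contra! h
  exact hleak.not_ge (abs_log_div_le_of_abs_sub_le
    (div_nonneg (sum_nonneg fun x _ => hQ0 x) (Nat.cast_nonneg _)) hv0 hv1 h)

lemma card_leaky_le {k : ℕ} (hd : d = 2 * k) (hε : 0 < ε) (hv0 : 0 ≤ v) (hv1 : v ≤ 1)
    (Q : Fin d → Y → ℝ) (y : Y) (hQ0 : ∀ x, 0 ≤ Q x y) (hQ : ∀ x x', Q x y ≤ exp ε * Q x' y) :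
    (#{H ∈ powersetCard k univ | leaky Q H v y} : ℝ)
      ≤ 2 * exp (-(k * v ^ 2) / (2 * (exp ε - 1) ^ 2))
        * #(powersetCard k (univ : Finset (Fin d))) := by
  have e₀ : Fin d ≃ Fin k × Bool := Fintype.equivOfCardEq (by simp [hd, mul_comm])
  simpa using card_filter_powersetCard_le e₀ (leaky Q · v y)
    fun e => card_leaky_pairTransversal_le hε hv0 hv1 Q y hQ0 hQ e

lemma card_filter_exists_leaky_le [Fintype Y] {n k : ℕ} (hd : d = 2 * k) (hε : 0 < ε)
    (hv0 : 0 ≤ v) (hv1 : v ≤ 1) (R : Fin n → Fin d → Y → ℝ) (hR0 : ∀ i x y, 0 ≤ R i x y)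
    (hpriv : ∀ i x x' y, R i x y ≤ exp ε * R i x' y) :
    (#{H ∈ powersetCard k univ | ∃ y i, leaky (R i) H v y} : ℝ)
      ≤ Fintype.card Y * #(univ.image R) * (2 * exp (-(k * v ^ 2) / (2 * (exp ε - 1) ^ 2)))
        * #(powersetCard k (univ : Finset (Fin d))) := by
  set Ω := powersetCard k (univ : Finset (Fin d))
  have hsub : {H ∈ Ω | ∃ y i, leaky (R i) H v y}
      ⊆ (univ ×ˢ univ.image R).biUnion fun p => {H ∈ Ω | leaky p.2 H v p.1} := by
    intro H hH
    obtain ⟨hHΩ, y, i, hleak⟩ := mem_filter.1 hH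
    exact mem_biUnion.2 ⟨(y, R i), mem_product.2 ⟨mem_univ y, mem_image_of_mem R (mem_univ i)⟩,
      mem_filter.2 ⟨hHΩ, hleak⟩⟩
  calc (#{H ∈ Ω | ∃ y i, leaky (R i) H v y} : ℝ)
      ≤ ∑ p ∈ univ ×ˢ univ.image R, (#{H ∈ Ω | leaky p.2 H v p.1} : ℝ) := by
        exact_mod_cast (card_le_card hsub).trans card_biUnion_le
    _ ≤ ∑ _p ∈ univ ×ˢ univ.image R,
          2 * exp (-(k * v ^ 2) / (2 * (exp ε - 1) ^ 2)) * (#Ω : ℝ) := by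
        refine sum_le_sum fun p hp => ?_
        obtain ⟨i, -, hi⟩ := mem_image.1 (mem_product.1 hp).2
        rw [← hi]
        exact card_leaky_le hd hε hv0 hv1 (R i) p.1 (fun x => hR0 i x p.1)
          fun x x' => hpriv i x x' p.1
    _ = _ := by
        rw [sum_const, card_product, card_univ, nsmul_eq_mul]
        push_cast
        ring

end Leakage

section Threshold

variable {ε L : ℝ} {d : ℕ}

lemma threshold_le_one (hε : 0 ≤ ε) (hd : 4 * (exp (2 * ε) - 1) ^ 2 * L < d) :
    (exp (2 * ε) - 1) * sqrt (4 / d * L) ≤ 1 := by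
  have hA : 0 ≤ exp (2 * ε) - 1 := sub_nonneg.2 (one_le_exp (by positivity))
  rw [← sqrt_sq hA, ← sqrt_mul (sq_nonneg _)]
  refine sqrt_le_one.mpr ?_
  rcases (Nat.cast_nonneg d : (0 : ℝ) ≤ d).eq_or_lt with hd0 | hd0
  · simp [← hd0]
  · rw [show (exp (2 * ε) - 1) ^ 2 * (4 / d * L) = 4 * (exp (2 * ε) - 1) ^ 2 * L / d by ring]
    exact (div_le_one hd0).2 hd.le

lemma mul_two_exp_neg_threshold_le {N : ℝ} {k : ℕ} (hε : 0 < ε) (hN : N = 0 ∨ 1 ≤ N)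
    (hdk : d = 2 * k) (hd : 4 * (exp (2 * ε) - 1) ^ 2 * log (12 * N) < d) :
    N * (2 * exp (-(k * ((exp (2 * ε) - 1) * sqrt (4 / d * log (12 * N))) ^ 2)
      / (2 * (exp ε - 1) ^ 2))) ≤ 1 / 6 := by
  rcases hN with rfl | hN
  · norm_num
  set L := log (12 * N)
  have hL : 0 < L := log_pos (by linarith)
  have hε1 : 0 < exp ε - 1 := by linarith [add_one_lt_exp hε.ne']
  have hA : exp (2 * ε) - 1 = (exp ε - 1) * (exp ε + 1) := by
    rw [two_mul, exp_add]
    ring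
  have hk : (0 : ℝ) < k := by
    have : (0 : ℝ) < d := lt_of_le_of_lt (by positivity) hd
    rw [hdk] at this
    push_cast at this
    linarith
  -- the exponent equals `(e^ε + 1)² L`, since `e^{2ε} - 1 = (e^ε - 1)(e^ε + 1)`
  have hexponent :
      L ≤ k * ((exp (2 * ε) - 1) * sqrt (4 / d * L)) ^ 2 / (2 * (exp ε - 1) ^ 2) := by
    rw [mul_pow, sq_sqrt (by positivity), hdk, hA]
    push_cast
    field_simp
    nlinarith [exp_pos ε]
  calc N * (2 * exp (-(k * ((exp (2 * ε) - 1) * sqrt (4 / d * L)) ^ 2)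
        / (2 * (exp ε - 1) ^ 2)))
      ≤ N * (2 * exp (-L)) := by
        gcongr
        rw [neg_div]
        exact neg_le_neg hexponent
    _ = 1 / 6 := by
        rw [exp_neg, exp_log (by positivity)]
        field_simp
        norm_num

end Threshold

theorem stmt_4_general {Y : Type*} [Fintype Y] (ε : ℝ) (n d : ℕ)
    (hε : 0 < ε) (hd : Even d)
    (R : Fin n → Fin d → Y → ℝ)
    (hd2 : 4 * (Real.exp (2 * ε) - 1) ^ 2 *
        Real.log (12 * (Fintype.card Y : ℝ) * ((Finset.univ.image R).card : ℝ)) < (d : ℝ))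
    (hR0 : ∀ i x y, 0 ≤ R i x y)
    (hpriv : ∀ i x x' y, R i x y ≤ Real.exp ε * R i x' y) :
    5 / 6 ≤
      (((Finset.powersetCard (d / 2) (Finset.univ : Finset (Fin d))).filter
          (fun H => ∀ y : Y, ∀ i : Fin n, ¬ leaky (R i) H
            ((Real.exp (2 * ε) - 1) * Real.sqrt (4 / (d : ℝ) *
              Real.log (12 * (Fintype.card Y : ℝ) * ((Finset.univ.image R).card : ℝ)))) y)).card : ℝ)
        / ((Finset.powersetCard (d / 2) (Finset.univ : Finset (Fin d))).card : ℝ) := by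
  obtain ⟨k, hk⟩ := hd
  have hdk : d = 2 * k := by omega
  rw [show d / 2 = k by omega]
  simp only [mul_assoc (12 : ℝ)] at hd2 ⊢
  have hN : (Fintype.card Y * #(univ.image R) : ℝ) = 0
      ∨ 1 ≤ (Fintype.card Y * #(univ.image R) : ℝ) := by
    rcases Nat.eq_zero_or_pos (Fintype.card Y * #(univ.image R)) with h | h
    exacts [Or.inl (by exact_mod_cast h), Or.inr (by exact_mod_cast h)]
  set v := (exp (2 * ε) - 1) * sqrt (4 / d * log (12 * (Fintype.card Y * #(univ.image R))))
  set Ω := powersetCard k (univ : Finset (Fin d))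
  have hv0 : 0 ≤ v := mul_nonneg (sub_nonneg.2 (one_le_exp (by positivity))) (sqrt_nonneg _)
  have hbad : (#{H ∈ Ω | ∃ y i, leaky (R i) H v y} : ℝ) ≤ #Ω / 6 := by
    grw [card_filter_exists_leaky_le hdk hε hv0 (threshold_le_one hε.le hd2) R hR0 hpriv,
      mul_two_exp_neg_threshold_le hε hN hdk hd2]
    linarith
  have hsplit : (#{H ∈ Ω | ∀ y i, ¬ leaky (R i) H v y} : ℝ)
      + #{H ∈ Ω | ∃ y i, leaky (R i) H v y} = #Ω := by
    have := card_filter_add_card_filter_not (s := Ω) (fun H => ∀ y i, ¬ leaky (R i) H v y)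
    simp only [not_forall, not_not] at this
    exact_mod_cast this
  have hΩ : (0 : ℝ) < #Ω := by
    exact_mod_cast card_pos.2 (powersetCard_nonempty.2 (by rw [card_univ, Fintype.card_fin]; omega))
  rw [le_div_iff₀ hΩ]
  linarith

/-- for `ε > 0`, a vector `R = (R_1,…,R_n)` of `ε`-private randomizers
from `[d]` to a finite message set `𝒴`, and even
`d > 4(e^{2ε}-1)² ln(12 |𝒴| |R|_≠)` where `|R|_≠` is the number of distinct
randomizers: if `H` is uniform among size-`d/2` subsets of `[d]`, then with
probability at least `5/6` over `H`, for every `y ∈ 𝒴` and `i ∈ [n]`, `y` is not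
`(e^{2ε}-1)√((4/d) ln(12 |𝒴| |R|_≠))`-leaky w.r.t. `H, R_i`. -/
theorem stmt_4 {Y : Type*} [Fintype Y] (ε : ℝ) (n d : ℕ)
    (hε : 0 < ε) (hd : Even d)
    (R : Fin n → Fin d → Y → ℝ)
    (hd2 : 4 * (Real.exp (2 * ε) - 1) ^ 2 *
        Real.log (12 * (Fintype.card Y : ℝ) * ((Finset.univ.image R).card : ℝ)) < (d : ℝ))
    (hR0 : ∀ i x y, 0 ≤ R i x y) (hR1 : ∀ i x, ∑ y, R i x y = 1)
    (hpriv : ∀ i x x' y, R i x y ≤ Real.exp ε * R i x' y) :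
    5 / 6 ≤
      (((Finset.powersetCard (d / 2) (Finset.univ : Finset (Fin d))).filter
          (fun H => ∀ y : Y, ∀ i : Fin n, ¬ leaky (R i) H
            ((Real.exp (2 * ε) - 1) * Real.sqrt (4 / (d : ℝ) *
              Real.log (12 * (Fintype.card Y : ℝ) * ((Finset.univ.image R).card : ℝ)))) y)).card : ℝ)
        / ((Finset.powersetCard (d / 2) (Finset.univ : Finset (Fin d))).card : ℝ) :=
  stmt_4_general ε n d hε hd R hd2 hR0 hpriv
end

section
/- Fix ε > 0, a vector R⃗ = (R_1,…,R_n) of ε-private randomizers from [d] to a finite message set 𝒴, and an even integer d > 4(e^{2ε}−1)²·ln(12·|𝒴|·|R⃗|_≠), where |R⃗|_≠ is the number of distinct randomizers among R_1,…,R_n. If H is chosen uniformly at random among subsets of [d] of size d/2, then with probability at least 2/3 over the choice of H, every randomizer Q_{H,R_i} for i ∈ [n] is ε'-private, where ε' = (e^{2ε}−1)·√((16/d)·ln(12·|𝒴|·|R⃗|_≠)). -/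
open scoped Classical

/-- `QPrivate R H ε'` says that the two-input randomizer `Q_{H,R}`, which on
input `+1` samples from `R(U_H)` and on input `-1` samples from `R(U_{H̄})`,
is `ε'`-private: each of its two output distributions is pointwise within a
factor `e^{ε'}` of the other. -/
noncomputable def QPrivate {d : ℕ} {Y : Type*} (R : Fin d → Y → ℝ)
    (H : Finset (Fin d)) (ε' : ℝ) : Prop :=
  ∀ y : Y, probU R H y ≤ Real.exp ε' * probU R (Finset.univ \ H) y ∧
    probU R (Finset.univ \ H) y ≤ Real.exp ε' * probU R H y

/-!
A uniformly random half `H` of `[d]` is obtained by pairing up `[d]` uniformly at random and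
then keeping one element of each pair by independent fair coins. Given the pairing,
`∑ x ∈ H, p x` is a sum of independent bounded terms, so Hoeffding's bound makes it concentrate
around `(∑ x, p x) / 2`. For an `ε`-private `p` all values lie in `[a, e^ε a]` with `a = min p`,
so the deviation allowed by `ε'` is large compared with the range of the terms; then `H` and `H̄`
carry the same mass up to a factor `e^{ε'}`, which is the privacy of `Q_{H,R}` at that output.
A union bound over the distinct randomizers and the outputs finishes the proof.
-/

open Finset Real

theorem exp_add_exp_le_two_mul_exp {u v c : ℝ} (h : |u - v| ≤ c) (l : ℝ) :
    exp (l * (u - (u + v) / 2)) + exp (l * (v - (u + v) / 2)) ≤ 2 * exp (l ^ 2 * c ^ 2 / 8) := by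
  set x := l * (u - v) / 2
  have hsq : x ^ 2 / 2 ≤ l ^ 2 * c ^ 2 / 8 := by
    have : (u - v) ^ 2 ≤ c ^ 2 := by
      rw [← sq_abs]; exact pow_le_pow_left₀ (abs_nonneg _) h 2
    have : x ^ 2 / 2 = l ^ 2 * (u - v) ^ 2 / 8 := by ring
    rw [this]; gcongr
  calc exp (l * (u - (u + v) / 2)) + exp (l * (v - (u + v) / 2)) = 2 * cosh x := by
        rw [cosh_eq, show l * (u - (u + v) / 2) = x by ring,
          show l * (v - (u + v) / 2) = -x by ring]
        ring
    _ ≤ 2 * exp (l ^ 2 * c ^ 2 / 8) := by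
        gcongr; exact (cosh_le_exp_half_sq x).trans (exp_le_exp.2 hsq)

theorem sum_exp_sum_sub_midpoint_le {ι : Type*} [Fintype ι] [DecidableEq ι] (q : ι → Bool → ℝ)
    {c : ℝ} (hq : ∀ i, |q i false - q i true| ≤ c) (l : ℝ) :
    ∑ s : ι → Bool, exp (l * ∑ i, (q i (s i) - (q i false + q i true) / 2)) ≤
      2 ^ Fintype.card ι * exp (Fintype.card ι * (l ^ 2 * c ^ 2 / 8)) := by
  calc ∑ s : ι → Bool, exp (l * ∑ i, (q i (s i) - (q i false + q i true) / 2))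
      = ∏ i, ∑ b, exp (l * (q i b - (q i false + q i true) / 2)) := by
        simp only [Fintype.prod_sum, mul_sum, exp_sum]
    _ ≤ ∏ _i : ι, 2 * exp (l ^ 2 * c ^ 2 / 8) := by
        refine prod_le_prod (fun _ _ => by positivity) fun i _ => ?_
        rw [Fintype.sum_bool, add_comm]
        exact exp_add_exp_le_two_mul_exp (hq i) l
    _ = 2 ^ Fintype.card ι * exp (Fintype.card ι * (l ^ 2 * c ^ 2 / 8)) := by
        rw [prod_const, card_univ, mul_pow, exp_nat_mul]

theorem card_filter_le_le_exp_mul_sum_exp {β : Type*} (s : Finset β) (g : β → ℝ) {l : ℝ}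
    (hl : 0 ≤ l) (t : ℝ) :
    (#{x ∈ s | t ≤ g x} : ℝ) ≤ exp (-(l * t)) * ∑ x ∈ s, exp (l * g x) := by
  rw [natCast_card_filter, mul_sum]
  refine sum_le_sum fun x _ => ?_
  rw [← exp_add]
  split_ifs with h
  · exact one_le_exp (by nlinarith)
  · positivity

theorem card_filter_le_abs_le_of_sum_exp_le {β : Type*} (s : Finset β) (g : β → ℝ) {v : ℝ}
    (hv : 0 < v) (hg : ∀ l, ∑ x ∈ s, exp (l * g x) ≤ exp (l ^ 2 * v) * #s) {t : ℝ}
    (ht : 0 ≤ t) :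
    (#{x ∈ s | t ≤ |g x|} : ℝ) ≤ 2 * exp (-(t ^ 2 / (4 * v))) * #s := by
  have upper_tail : ∀ g' : β → ℝ, (∀ l, ∑ x ∈ s, exp (l * g' x) ≤ exp (l ^ 2 * v) * #s) →
      (#{x ∈ s | t ≤ g' x} : ℝ) ≤ exp (-(t ^ 2 / (4 * v))) * #s := by
    intro g' hg'
    have hl : 0 ≤ t / (2 * v) := by positivity
    calc (#{x ∈ s | t ≤ g' x} : ℝ)
        ≤ exp (-(t / (2 * v) * t)) * (exp ((t / (2 * v)) ^ 2 * v) * #s) :=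
          (card_filter_le_le_exp_mul_sum_exp s g' hl t).trans (by gcongr; exact hg' _)
      _ = exp (-(t ^ 2 / (4 * v))) * #s := by
          rw [← mul_assoc, ← exp_add]; congr 2; field_simp; ring
  have lower_tail := upper_tail (fun x => -g x) fun l => by
    simpa only [neg_mul, mul_neg, neg_sq] using hg (-l)
  calc (#{x ∈ s | t ≤ |g x|} : ℝ) ≤ #{x ∈ s | t ≤ g x} + #{x ∈ s | t ≤ -g x} := by
        simp only [le_abs, filter_or]; exact_mod_cast card_union_le _ _
    _ ≤ 2 * exp (-(t ^ 2 / (4 * v))) * #s := by linarith [upper_tail g hg]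

theorem le_exp_mul_of_abs_sub_le {S S' r : ℝ} (hr0 : 0 ≤ r) (hr2 : r ≤ 2) (hSS' : 0 ≤ S + S')
    (h : |S - S'| ≤ r * (S + S') / 4) : S ≤ exp r * S' ∧ S' ≤ exp r * S := by
  obtain ⟨h₁, h₂⟩ := abs_le.1 h
  have := mul_nonneg hSS' (by linarith : 0 ≤ 4 - r)
  have hS : 0 ≤ S := by nlinarith
  have hS' : 0 ≤ S' := by nlinarith
  have hexp := add_one_le_exp r
  constructor
  · calc S ≤ (r + 1) * S' := by nlinarith
      _ ≤ exp r * S' := by gcongr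
  · calc S' ≤ (r + 1) * S := by nlinarith
      _ ≤ exp r * S := by gcongr

section HalfSplits

variable {α : Type*}

theorem card_powersetCard_nsmul_sum_perm_map [Fintype α] [DecidableEq α] {M : Type*}
    [AddCommMonoid M] (f : Finset α → M) {k : ℕ} {H₀ : Finset α} (hH₀ : #H₀ = k) :
    #(powersetCard k (univ : Finset α)) • ∑ σ : Equiv.Perm α, f (H₀.map σ.toEmbedding) =
      Fintype.card (Equiv.Perm α) • ∑ H ∈ powersetCard k univ, f H := by
  have orbit_sum : ∀ H ∈ powersetCard k (univ : Finset α),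
      ∑ σ : Equiv.Perm α, f (H.map σ.toEmbedding) =
        ∑ σ : Equiv.Perm α, f (H₀.map σ.toEmbedding) := by
    intro H hH
    obtain ⟨τ, rfl⟩ :=
      Equiv.Perm.exists_map_finset_eq H₀ H (by rw [hH₀, (mem_powersetCard.1 hH).2])
    refine Fintype.sum_equiv (Equiv.mulRight τ) _ _ fun σ => ?_
    simp only [map_map, Equiv.coe_mulRight]
    rfl
  have perm_invariant : ∀ σ : Equiv.Perm α,
      ∑ H ∈ powersetCard k univ, f (H.map σ.toEmbedding) = ∑ H ∈ powersetCard k univ, f H := by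
    intro σ
    have := sum_map (powersetCard k univ) (mapEmbedding σ.toEmbedding).toEmbedding f
    rw [← powersetCard_map, map_univ_equiv] at this
    exact this.symm
  calc #(powersetCard k (univ : Finset α)) • ∑ σ : Equiv.Perm α, f (H₀.map σ.toEmbedding)
      = ∑ H ∈ powersetCard k univ, ∑ σ : Equiv.Perm α, f (H.map σ.toEmbedding) := by
        rw [sum_congr rfl orbit_sum, sum_const]
    _ = ∑ σ : Equiv.Perm α, ∑ H ∈ powersetCard k univ, f H := by
        rw [sum_comm]; exact sum_congr rfl fun σ _ => perm_invariant σ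
    _ = Fintype.card (Equiv.Perm α) • ∑ H ∈ powersetCard k univ, f H := by
        rw [sum_const, card_univ]

section pairChoice

variable {ι : Type*} [Fintype ι]

def pairChoice (g : ι × Bool ≃ α) (s : ι → Bool) : Finset α :=
  univ.map ⟨fun i => g (i, s i), fun _ _ h => congrArg Prod.fst (g.injective h)⟩

variable (g : ι × Bool ≃ α) (s : ι → Bool)

theorem card_pairChoice : #(pairChoice g s) = Fintype.card ι := by
  simp [pairChoice]

theorem sum_pairChoice {M : Type*} [AddCommMonoid M] (p : α → M) :
    ∑ x ∈ pairChoice g s, p x = ∑ i, p (g (i, s i)) := by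
  simp only [pairChoice, sum_map]
  rfl

theorem map_pairChoice (σ : Equiv.Perm α) :
    (pairChoice g s).map σ.toEmbedding = pairChoice (g.trans σ) s := by
  simp only [pairChoice, map_map]
  rfl

theorem sum_eq_sum_pairs [Fintype α] {M : Type*} [AddCommMonoid M] (p : α → M) :
    ∑ x, p x = ∑ i, (p (g (i, false)) + p (g (i, true))) := by
  rw [← Equiv.sum_comp g, Fintype.sum_prod_type]
  simp [add_comm]

end pairChoice

theorem sum_exp_sum_sub_half_le [Fintype α] [DecidableEq α] {m : ℕ}
    (hα : Fintype.card α = 2 * m) {p : α → ℝ} {c : ℝ} (hc : ∀ x x', p x - p x' ≤ c) (l : ℝ) :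
    ∑ H ∈ powersetCard m univ, exp (l * (∑ x ∈ H, p x - (∑ x, p x) / 2)) ≤
      exp (l ^ 2 * (m * c ^ 2 / 8)) * #(powersetCard m (univ : Finset α)) := by
  set F : Finset α → ℝ := fun H => exp (l * (∑ x ∈ H, p x - (∑ x, p x) / 2))
  -- Averaging over the pairings `g.trans σ` and the coins `s` weighs all halves equally
  -- (orbit lemma), while for a fixed pairing the sum over `s` factorises (Hoeffding).
  obtain ⟨g⟩ : Nonempty (Fin m × Bool ≃ α) :=
    ⟨Fintype.equivOfCardEq (by simp [hα, mul_comm])⟩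
  have per_pairing : ∀ g' : Fin m × Bool ≃ α,
      ∑ s : Fin m → Bool, F (pairChoice g' s) ≤ 2 ^ m * exp (m * (l ^ 2 * c ^ 2 / 8)) := by
    intro g'
    have := sum_exp_sum_sub_midpoint_le (fun i b => p (g' (i, b)))
      (fun i => abs_sub_le_iff.2 ⟨hc _ _, hc _ _⟩) l
    simp only [Fintype.card_fin] at this
    convert this using 3 with s
    simp only [sum_pairChoice, sum_eq_sum_pairs g', sum_sub_distrib, sum_div]
  have orbit := fun s => card_powersetCard_nsmul_sum_perm_map F (card_pairChoice g s)
  simp only [Fintype.card_fin, map_pairChoice, nsmul_eq_mul] at orbit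
  have hperm : (0 : ℝ) < Fintype.card (Equiv.Perm α) := by exact_mod_cast Fintype.card_pos
  refine le_of_mul_le_mul_left ?_ (mul_pos hperm (pow_pos two_pos m))
  calc (Fintype.card (Equiv.Perm α) * 2 ^ m : ℝ) * ∑ H ∈ powersetCard m univ, F H
      = ∑ s : Fin m → Bool, (Fintype.card (Equiv.Perm α) : ℝ) * ∑ H ∈ powersetCard m univ, F H := by
        simp only [sum_const, card_univ, Fintype.card_fun, Fintype.card_bool, Fintype.card_fin,
          nsmul_eq_mul, Nat.cast_pow, Nat.cast_ofNat]
        ring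
    _ = ∑ s : Fin m → Bool, #(powersetCard m (univ : Finset α)) *
          ∑ σ : Equiv.Perm α, F (pairChoice (g.trans σ) s) := by
        simp only [orbit]
    _ = #(powersetCard m (univ : Finset α)) *
          ∑ σ : Equiv.Perm α, ∑ s : Fin m → Bool, F (pairChoice (g.trans σ) s) := by
        rw [← mul_sum, sum_comm]
    _ ≤ #(powersetCard m (univ : Finset α)) *
          ∑ _σ : Equiv.Perm α, 2 ^ m * exp (m * (l ^ 2 * c ^ 2 / 8)) := by
        gcongr with σ; exact per_pairing _
    _ = (Fintype.card (Equiv.Perm α) * 2 ^ m) *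
          (exp (l ^ 2 * (m * c ^ 2 / 8)) * #(powersetCard m (univ : Finset α))) := by
        rw [sum_const, card_univ, nsmul_eq_mul]; ring_nf

variable [Fintype α] [DecidableEq α]

-- For `#H = #Hᶜ` and `p = fun x => R x y`, this is the `r`-privacy of `Q_{H,R}` at output `y`.
def BalancedSplit (p : α → ℝ) (r : ℝ) (H : Finset α) : Prop :=
  ∑ x ∈ H, p x ≤ exp r * ∑ x ∈ Hᶜ, p x ∧ ∑ x ∈ Hᶜ, p x ≤ exp r * ∑ x ∈ H, p x

theorem card_filter_not_balancedSplit_le {m : ℕ} (hα : Fintype.card α = 2 * m) {ε r : ℝ}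
    (hε : 0 < ε) (hr0 : 0 ≤ r) (hr2 : r ≤ 2) {p : α → ℝ} (hp : ∀ x x', p x ≤ exp ε * p x') :
    (#{H ∈ powersetCard m univ | ¬ BalancedSplit p r H} : ℝ) ≤
      2 * exp (-(r ^ 2 * m / (8 * (exp ε - 1) ^ 2))) * #(powersetCard m (univ : Finset α)) := by
  set C := powersetCard m (univ : Finset α)
  set T := ∑ x, p x
  have hε1 : 0 < exp ε - 1 := by linarith [add_one_lt_exp hε.ne']
  by_cases hzero : ∀ x, p x = 0
  · have : {H ∈ C | ¬ BalancedSplit p r H} = ∅ :=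
      filter_false_of_mem fun H _ => by simp [BalancedSplit, hzero]
    rw [this, card_empty, Nat.cast_zero]
    positivity
  obtain ⟨x₀, hx₀⟩ := not_forall.1 hzero
  obtain ⟨xm, -, hmin⟩ := exists_min_image univ p ⟨x₀, mem_univ x₀⟩
  set a := p xm
  have hp0 : ∀ x, 0 ≤ p x := fun x => by nlinarith [hp x x]  -- `p x ≤ e^ε p x` with `e^ε > 1`
  have ha : 0 < a := (hp0 xm).lt_of_ne fun h =>
    hx₀ (le_antisymm (by simpa [a, ← h] using hp x₀ xm) (hp0 x₀))
  have hm : 0 < m := by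
    have := Fintype.card_pos_iff.2 ⟨x₀⟩
    omega
  set c := (exp ε - 1) * a
  have hc : ∀ x x', p x - p x' ≤ c := fun x x' => by
    nlinarith [hp x xm, hmin x' (mem_univ x')]
  have hT : 2 * m * a ≤ T := by
    calc (2 * m * a : ℝ) = ∑ _x : α, a := by simp [hα]
      _ ≤ T := sum_le_sum fun x _ => hmin x (mem_univ x)
  have hT0 : 0 ≤ T := sum_nonneg fun x _ => hp0 x
  set t := r * T / 8 with ht_def
  have not_balanced_sub :
      {H ∈ C | ¬ BalancedSplit p r H} ⊆ {H ∈ C | t ≤ |∑ x ∈ H, p x - T / 2|} := by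
    refine monotone_filter_right _ fun H _ hbad => ?_
    by_contra! hclose
    have hsplit : ∑ x ∈ H, p x + ∑ x ∈ Hᶜ, p x = T := sum_add_sum_compl H p
    refine hbad (le_exp_mul_of_abs_sub_le hr0 hr2 (by rw [hsplit]; positivity) ?_)
    rw [hsplit, show ∑ x ∈ Hᶜ, p x = T - ∑ x ∈ H, p x by linarith,
      show ∑ x ∈ H, p x - (T - ∑ x ∈ H, p x) = 2 * (∑ x ∈ H, p x - T / 2) by ring, abs_mul,
      abs_two]
    linarith
  have tail := card_filter_le_abs_le_of_sum_exp_le C (fun H => ∑ x ∈ H, p x - T / 2)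
    (v := m * c ^ 2 / 8) (by positivity) (sum_exp_sum_sub_half_le hα hc) (t := t) (by positivity)
  have hexponent : r ^ 2 * m / (8 * (exp ε - 1) ^ 2) ≤ t ^ 2 / (4 * (m * c ^ 2 / 8)) := by
    have ht : r * m * a / 4 ≤ t := by linarith [mul_le_mul_of_nonneg_left hT hr0]
    have ht2 := pow_le_pow_left₀ (by positivity) ht 2
    rw [div_le_div_iff₀ (by positivity) (by positivity)]
    nlinarith
  calc (#{H ∈ C | ¬ BalancedSplit p r H} : ℝ) ≤ #{H ∈ C | t ≤ |∑ x ∈ H, p x - T / 2|} := by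
        exact_mod_cast card_le_card not_balanced_sub
    _ ≤ 2 * exp (-(t ^ 2 / (4 * (m * c ^ 2 / 8)))) * #C := tail
    _ ≤ 2 * exp (-(r ^ 2 * m / (8 * (exp ε - 1) ^ 2))) * #C := by gcongr

end HalfSplits

theorem qPrivate_of_forall_balancedSplit {d : ℕ} {Y : Type*} {R : Fin d → Y → ℝ}
    {H : Finset (Fin d)} {r : ℝ} (hH : #H = #Hᶜ) (h : ∀ y, BalancedSplit (fun x => R x y) r H) :
    QPrivate R H r := fun y => by
  simp only [probU, ← compl_eq_univ_sdiff, ← hH, mul_div_assoc']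
  exact ⟨div_le_div_of_nonneg_right (h y).1 (Nat.cast_nonneg _),
    div_le_div_of_nonneg_right (h y).2 (Nat.cast_nonneg _)⟩

theorem card_filter_not_forall_qPrivate_le {Y : Type*} [Fintype Y] {n d m : ℕ}
    (hd : d = 2 * m) {ε r : ℝ} (hε : 0 < ε) (hr0 : 0 ≤ r) (hr2 : r ≤ 2)
    (R : Fin n → Fin d → Y → ℝ) (hR : ∀ i x x' y, R i x y ≤ exp ε * R i x' y) :
    (#{H ∈ powersetCard m univ | ¬ ∀ i, QPrivate (R i) H r} : ℝ) ≤
      #(univ.image R) * Fintype.card Y * (2 * exp (-(r ^ 2 * m / (8 * (exp ε - 1) ^ 2)))) *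
        #(powersetCard m (univ : Finset (Fin d))) := by
  set C := powersetCard m (univ : Finset (Fin d))
  have hα : Fintype.card (Fin d) = 2 * m := by simp [hd]
  have bad_sub : {H ∈ C | ¬ ∀ i, QPrivate (R i) H r} ⊆ (univ.image R).biUnion fun Rf =>
      univ.biUnion fun y => {H ∈ C | ¬ BalancedSplit (fun x => Rf x y) r H} := by
    intro H hH
    obtain ⟨hHC, hbad⟩ := mem_filter.1 hH
    obtain ⟨i, hi⟩ := not_forall.1 hbad
    have hcard : #H = #Hᶜ := by
      rw [card_compl, (mem_powersetCard.1 hHC).2, hα]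
      omega
    obtain ⟨y, hy⟩ := not_forall.1 (mt (qPrivate_of_forall_balancedSplit hcard) hi)
    simp only [mem_biUnion, mem_image, mem_univ, true_and, mem_filter]
    exact ⟨R i, ⟨i, rfl⟩, y, hHC, hy⟩
  calc (#{H ∈ C | ¬ ∀ i, QPrivate (R i) H r} : ℝ)
      ≤ ∑ Rf ∈ univ.image R, ∑ y : Y, (#{H ∈ C | ¬ BalancedSplit (fun x => Rf x y) r H} : ℝ) := by
        exact_mod_cast (card_le_card bad_sub).trans
          (card_biUnion_le.trans (sum_le_sum fun _ _ => card_biUnion_le))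
    _ ≤ ∑ Rf ∈ univ.image R, ∑ _y : Y,
          2 * exp (-(r ^ 2 * m / (8 * (exp ε - 1) ^ 2))) * #C := by
        gcongr with Rf hRf y
        obtain ⟨i, -, rfl⟩ := mem_image.1 hRf
        exact card_filter_not_balancedSplit_le hα hε hr0 hr2 fun x x' => hR i x x' y
    _ = _ := by
        simp only [sum_const, card_univ, nsmul_eq_mul]
        ring

theorem one_sub_le_card_filter_div_card {β : Type*} {s : Finset β} (hs : s.Nonempty)
    (P : β → Prop) [DecidablePred P] {δ : ℝ} (h : (#{x ∈ s | ¬ P x} : ℝ) ≤ δ * #s) :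
    1 - δ ≤ #{x ∈ s | P x} / #s := by
  have hsplit : (#{x ∈ s | P x} : ℝ) + #{x ∈ s | ¬ P x} = #s := by
    exact_mod_cast card_filter_add_card_filter_not P
  rw [le_div_iff₀ (by exact_mod_cast hs.card_pos)]
  linarith

theorem mul_sqrt_le_two {E L d : ℝ} (hE : 0 ≤ E) (hd : 0 < d) (h : 4 * E ^ 2 * L < d) :
    E * sqrt (16 / d * L) ≤ 2 := by
  rw [← sqrt_sq hE, ← sqrt_mul (sq_nonneg E), sqrt_le_left zero_le_two,
    show E ^ 2 * (16 / d * L) = 4 * (4 * E ^ 2 * L) / d by ring, div_le_iff₀ hd]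
  linarith

theorem sq_mul_sqrt_mul_div_eq {ε L : ℝ} {m : ℕ} (hε : ε ≠ 0) (hm : 0 < m) (hL : 0 ≤ L) :
    ((exp (2 * ε) - 1) * sqrt (16 / (2 * m : ℕ) * L)) ^ 2 * m / (8 * (exp ε - 1) ^ 2) =
      (exp ε + 1) ^ 2 * L := by
  have : exp ε - 1 ≠ 0 := sub_ne_zero.2 (mt (exp_eq_one_iff ε).1 hε)
  rw [mul_pow, sq_sqrt (by positivity), two_mul, exp_add]
  push_cast
  field_simp
  ring

theorem natCast_mul_two_mul_exp_neg_le_one_third {N : ℕ} {X : ℝ} (hX : 2 * log (12 * N) ≤ X) :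
    N * (2 * exp (-X)) ≤ 1 / 3 := by
  rcases N.eq_zero_or_pos with rfl | hN
  · norm_num
  have hN1 : (1 : ℝ) ≤ N := by exact_mod_cast hN
  have hexp : exp (-X) ≤ ((12 * N : ℝ) ^ 2)⁻¹ := by
    calc exp (-X) ≤ exp (-log ((12 * N : ℝ) ^ 2)) := by
          rw [log_pow]; push_cast; exact exp_le_exp.2 (by linarith)
      _ = ((12 * N : ℝ) ^ 2)⁻¹ := by rw [exp_neg, exp_log (by positivity)]
  calc N * (2 * exp (-X)) ≤ N * (2 * ((12 * N : ℝ) ^ 2)⁻¹) := by gcongr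
    _ = 1 / (72 * N) := by field_simp; ring
    _ ≤ 1 / 3 := by gcongr; linarith

theorem stmt_5_general {Y : Type*} [Fintype Y] (ε : ℝ) (n d : ℕ)
    (hε : 0 < ε) (hd : Even d)
    (R : Fin n → Fin d → Y → ℝ)
    (hd2 : 4 * (Real.exp (2 * ε) - 1) ^ 2 *
        Real.log (12 * (Fintype.card Y : ℝ) * ((Finset.univ.image R).card : ℝ)) < (d : ℝ))
    (hpriv : ∀ i x x' y, R i x y ≤ Real.exp ε * R i x' y) :
    2 / 3 ≤
      (((Finset.powersetCard (d / 2) (Finset.univ : Finset (Fin d))).filter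
          (fun H => ∀ i : Fin n, QPrivate (R i) H
            ((Real.exp (2 * ε) - 1) * Real.sqrt (16 / (d : ℝ) *
              Real.log (12 * (Fintype.card Y : ℝ) * ((Finset.univ.image R).card : ℝ)))))).card : ℝ)
        / ((Finset.powersetCard (d / 2) (Finset.univ : Finset (Fin d))).card : ℝ) := by
  obtain ⟨m, rfl⟩ := hd.two_dvd
  rw [Nat.mul_div_cancel_left m two_pos]
  have hC : (powersetCard m (univ : Finset (Fin (2 * m)))).Nonempty :=
    powersetCard_nonempty.2 (by rw [card_univ, Fintype.card_fin]; omega)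
  set L := log (12 * (Fintype.card Y : ℝ) * #(univ.image R))
  set r := (exp (2 * ε) - 1) * sqrt (16 / ((2 * m : ℕ) : ℝ) * L)
  rcases m.eq_zero_or_pos with rfl | hm
  · -- both halves are empty and `probU` is the junk value `0 / 0 = 0`
    refine le_trans (by norm_num) (one_sub_le_card_filter_div_card hC _ (δ := 0) ?_)
    simp [QPrivate, probU, eq_empty_of_isEmpty]
  have hE : 0 ≤ exp (2 * ε) - 1 := by linarith [one_le_exp (by positivity : 0 ≤ 2 * ε)]
  have hr0 : 0 ≤ r := mul_nonneg hE (sqrt_nonneg _)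
  have hr2 : r ≤ 2 := mul_sqrt_le_two hE (by positivity) hd2
  have hL : 0 ≤ L := by
    simpa using log_natCast_nonneg (12 * Fintype.card Y * #(univ.image R))
  refine le_trans (by norm_num) (one_sub_le_card_filter_div_card hC _ (δ := 1 / 3)
    ((card_filter_not_forall_qPrivate_le rfl hε hr0 hr2 R hpriv).trans
      (mul_le_mul_of_nonneg_right ?_ (Nat.cast_nonneg _))))
  have hX : 2 * log (12 * ((Fintype.card Y * #(univ.image R) : ℕ) : ℝ)) ≤
      r ^ 2 * m / (8 * (exp ε - 1) ^ 2) := by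
    rw [sq_mul_sqrt_mul_div_eq hε.ne' hm hL, Nat.cast_mul, ← mul_assoc]
    have : (2 : ℝ) ≤ (exp ε + 1) ^ 2 := by nlinarith [one_le_exp hε.le]
    exact mul_le_mul_of_nonneg_right this hL
  have := natCast_mul_two_mul_exp_neg_le_one_third hX
  push_cast at this
  linarith

/-- for `ε > 0`, a vector `R = (R_1,…,R_n)` of `ε`-private randomizers
from `[d]` to a finite message set `𝒴`, and even `d > 4(e^{2ε}-1)² ln(12 |𝒴| |R|_≠)`:
if `H` is uniform among size-`d/2` subsets of `[d]`, then with probability at least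
`2/3` over `H`, every randomizer `Q_{H,R_i}` is `ε'`-private for
`ε' = (e^{2ε}-1)√((16/d) ln(12 |𝒴| |R|_≠))`. -/
theorem stmt_5 {Y : Type*} [Fintype Y] (ε : ℝ) (n d : ℕ)
    (hε : 0 < ε) (hd : Even d)
    (R : Fin n → Fin d → Y → ℝ)
    (hd2 : 4 * (Real.exp (2 * ε) - 1) ^ 2 *
        Real.log (12 * (Fintype.card Y : ℝ) * ((Finset.univ.image R).card : ℝ)) < (d : ℝ))
    (hR0 : ∀ i x y, 0 ≤ R i x y) (hR1 : ∀ i x, ∑ y, R i x y = 1)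
    (hpriv : ∀ i x x' y, R i x y ≤ Real.exp ε * R i x' y) :
    2 / 3 ≤
      (((Finset.powersetCard (d / 2) (Finset.univ : Finset (Fin d))).filter
          (fun H => ∀ i : Fin n, QPrivate (R i) H
            ((Real.exp (2 * ε) - 1) * Real.sqrt (16 / (d : ℝ) *
              Real.log (12 * (Fintype.card Y : ℝ) * ((Finset.univ.image R).card : ℝ)))))).card : ℝ)
        / ((Finset.powersetCard (d / 2) (Finset.univ : Finset (Fin d))).card : ℝ) :=
  stmt_5_general ε n d hε hd R hd2 hpriv
end

section
/- Fix ε > 0, δ ∈ (0,1), an even integer d > 4(e^{2ε}−1)²·ln(12·e^ε·n/δ), and n ε-private randomizers R_1,…,R_n from [d] to a countable message set 𝒴. If H is sampled uniformly among subsets of [d] of size d/2, then with probability greater than 2/3 over the choice of H, every randomizer Q_{H,R_i} for i ∈ [n] satisfies (ε', δ)-privacy, where ε' = (e^{2ε}−1)·√((16/d)·ln(24·e^ε·n/δ)). -/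
open scoped Classical

/-- `probUSet R S Ys` is `Pr[R(U_S) ∈ Ys]`. -/
noncomputable def probUSet {d : ℕ} {Y : Type*} (R : Fin d → Y → ℝ)
    (S : Finset (Fin d)) (Ys : Set Y) : ℝ :=
  ∑' y : Y, if y ∈ Ys then probU R S y else 0

/-- `QApproxPrivate R H ε' δ` says that the two-input randomizer `Q_{H,R}`, which
on input `+1` samples from `R(U_H)` and on input `-1` samples from `R(U_{H̄})`,
satisfies `(ε',δ)`-privacy: for every event `Ys ⊆ 𝒴`, the probabilities of `Ys`
under its two output distributions are within a factor `e^{ε'}` plus `δ`. -/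
noncomputable def QApproxPrivate {d : ℕ} {Y : Type*} (R : Fin d → Y → ℝ)
    (H : Finset (Fin d)) (ε' δ : ℝ) : Prop :=
  ∀ Ys : Set Y,
    probUSet R H Ys ≤ Real.exp ε' * probUSet R (Finset.univ \ H) Ys + δ ∧
    probUSet R (Finset.univ \ H) Ys ≤ Real.exp ε' * probUSet R H Ys + δ

/-!
Fix a randomizer `R` and an output `y`. The values `R x y`, `x ∈ [d]`, lie within a factor
`e^ε` of each other, hence in an interval of length `(e^ε - 1)` times their mean. Hoeffding's
inequality for sampling without replacement then shows that, for all but a `2 e^{-L}` fraction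
of the halves `H` (where `L = ln (24 e^ε n / δ)`), the sums of `R x y` over `H` and over `H̄`
differ by at most `ε'/4` of their total; as the hypothesis on `d` keeps `ε' ≤ 2√2`, where
`(4 + ε') / (4 - ε') ≤ e^{ε'}`, the likelihood ratio of `R(U_H)` and `R(U_H̄)` at `y` is then
at most `e^{ε'}`. Averaging over `y`, the expected `R(U_[d])`-mass of the outputs where this
fails is at most `2 e^{-L} = δ e^{-ε} / (12 n)`. By Markov's inequality and a union bound over
the `n` randomizers, for at least `11/12` of the halves all these masses are at most `δ e^{-ε}`,
and since `R(U_H)` and `R(U_H̄)` are both bounded by `e^ε R(U_[d])`, every `Q_{H,R_i}` is then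
`(ε', δ)`-private.

Hoeffding's bound goes through the moment generating function, by induction on the sample
size: drawing one element first and then a sample of the rest factors the exponential, and the
first factor is controlled by Hoeffding's lemma.
-/

open Finset Real
open scoped BigOperators

section SamplingWithoutReplacement

variable {ι : Type*}

theorem exp_le_cosh_add_mul_sinh_div {u b : ℝ} (hu : |u| ≤ b) :
    exp u ≤ cosh b + u * (sinh b / b) := by
  obtain ⟨hlo, hhi⟩ := abs_le.1 hu
  rcases ((abs_nonneg u).trans hu).eq_or_lt with rfl | hb
  · simp [le_antisymm hhi (by simpa using hlo)]
  have hconv := convexOn_exp.2 (Set.mem_univ (-b)) (Set.mem_univ b)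
    (by apply div_nonneg <;> linarith : 0 ≤ (b - u) / (2 * b))
    (by apply div_nonneg <;> linarith : 0 ≤ (b + u) / (2 * b))
    (by field_simp; ring)
  have hmid : ((b - u) / (2 * b)) • -b + ((b + u) / (2 * b)) • b = u := by
    simp only [smul_eq_mul]; field_simp; ring
  rw [hmid] at hconv
  refine hconv.trans_eq ?_
  rw [cosh_eq, sinh_eq, smul_eq_mul, smul_eq_mul]
  field_simp
  ring

theorem sum_exp_le_card_mul_exp_sq_div_two {A : Finset ι} {u : ι → ℝ} {b : ℝ}
    (hsum : ∑ x ∈ A, u x = 0) (hu : ∀ x ∈ A, |u x| ≤ b) :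
    ∑ x ∈ A, exp (u x) ≤ #A * exp (b ^ 2 / 2) :=
  calc ∑ x ∈ A, exp (u x) ≤ ∑ x ∈ A, (cosh b + u x * (sinh b / b)) :=
        sum_le_sum fun x hx => exp_le_cosh_add_mul_sinh_div (hu x hx)
    _ = #A * cosh b := by rw [sum_add_distrib, ← sum_mul, hsum]; simp
    _ ≤ #A * exp (b ^ 2 / 2) := by gcongr; exact cosh_le_exp_half_sq b

theorem sum_sum_powersetCard_erase_insert [DecidableEq ι] {M : Type*} [AddCommMonoid M]
    (A : Finset ι) (m : ℕ) (g : Finset ι → M) :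
    ∑ x ∈ A, ∑ H ∈ (A.erase x).powersetCard m, g (insert x H) =
      (m + 1) • ∑ H ∈ A.powersetCard (m + 1), g H := by
  have hfiber : ∀ x ∈ A, ∑ H ∈ (A.erase x).powersetCard m, g (insert x H) =
      ∑ H ∈ A.powersetCard (m + 1) with x ∈ H, g H := by
    intro x hx
    refine sum_nbij' (insert x) (erase · x) (fun H hH => ?_) (fun H hH => ?_)
      (fun H hH => ?_) (fun H hH => ?_) (fun _ _ => rfl) <;>
      simp only [mem_filter, mem_powersetCard, subset_erase] at hH ⊢
    · refine ⟨⟨insert_subset hx hH.1.1, ?_⟩, mem_insert_self x H⟩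
      rw [card_insert_of_notMem hH.1.2, hH.2]
    · exact ⟨⟨(erase_subset x H).trans hH.1.1, notMem_erase x H⟩, by
        rw [card_erase_of_mem hH.2, hH.1.2, Nat.add_sub_cancel]⟩
    · exact erase_insert hH.1.2
    · exact insert_erase hH.2
  rw [sum_congr rfl hfiber, sum_comm' (t' := A.powersetCard (m + 1)) (s' := id)
    (fun x H => by simp only [mem_filter, mem_powersetCard, id]; grind), smul_sum]
  refine sum_congr rfl fun H hH => ?_
  rw [sum_const, id, (mem_powersetCard.1 hH).2]

-- Putting `x` in front of an `m`-subset of `A.erase x` shifts its centred sum by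
-- `c * (v x - 𝔼 v)`, with the same `c` for every `x`.
theorem exists_forall_add_mul_expect_erase_eq [DecidableEq ι] (A : Finset ι) (v : ι → ℝ) {m : ℕ}
    (hm : m + 1 ≤ #A) : ∃ c ∈ Set.Icc (0 : ℝ) 1, ∀ x ∈ A,
      v x + m * 𝔼 z ∈ A.erase x, v z - (m + 1) * 𝔼 z ∈ A, v z = c * (v x - 𝔼 z ∈ A, v z) := by
  rcases m.eq_zero_or_pos with rfl | hm0
  · exact ⟨1, by simp, fun x _ => by simp⟩
  have hA : (m : ℝ) + 1 ≤ #A := by exact_mod_cast hm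
  have hm1 : (1 : ℝ) ≤ m := by exact_mod_cast hm0
  refine ⟨(#A - 1 - m) / (#A - 1), ⟨by apply div_nonneg <;> linarith,
    div_le_one_of_le₀ (by linarith) (by linarith)⟩, fun x hx => ?_⟩
  have hA1 : ((#(A.erase x) : ℕ) : ℝ) = #A - 1 := by
    rw [card_erase_of_mem hx, Nat.cast_sub (by omega), Nat.cast_one]
  have hA0 : (#A : ℝ) - 1 ≠ 0 := by linarith
  have hA0' : (#A : ℝ) ≠ 0 := by linarith
  rw [expect_eq_sum_div_card, expect_eq_sum_div_card, hA1, sum_erase_eq_sub hx]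
  field_simp
  ring

theorem exists_mul_sum_powersetCard_succ_exp_eq [DecidableEq ι] (A : Finset ι) (v : ι → ℝ)
    {m : ℕ} (hm : m + 1 ≤ #A) : ∃ c ∈ Set.Icc (0 : ℝ) 1,
      (m + 1) * ∑ H ∈ A.powersetCard (m + 1), exp (∑ x ∈ H, v x - (m + 1) * 𝔼 x ∈ A, v x) =
        ∑ x ∈ A, exp (c * (v x - 𝔼 z ∈ A, v z)) *
          ∑ H ∈ (A.erase x).powersetCard m, exp (∑ z ∈ H, v z - m * 𝔼 z ∈ A.erase x, v z) := by
  obtain ⟨c, hc, hw⟩ := exists_forall_add_mul_expect_erase_eq A v hm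
  refine ⟨c, hc, ?_⟩
  rw [← Nat.cast_add_one, ← nsmul_eq_mul, ← sum_sum_powersetCard_erase_insert]
  refine sum_congr rfl fun x hx => ?_
  rw [mul_sum]
  refine sum_congr rfl fun H hH => ?_
  rw [sum_insert fun h => by simpa using (mem_powersetCard.1 hH).1 h, ← exp_add, ← hw x hx]
  push_cast
  ring_nf

theorem sum_powersetCard_exp_sub_le (A : Finset ι) (v : ι → ℝ) {lo hi : ℝ}
    (hv : ∀ x ∈ A, v x ∈ Set.Icc lo hi) (m : ℕ) :
    ∑ H ∈ A.powersetCard m, exp (∑ x ∈ H, v x - m * 𝔼 x ∈ A, v x) ≤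
      #(A.powersetCard m) * exp (m * (hi - lo) ^ 2 / 2) := by
  classical
  induction m generalizing A with
  | zero => simp
  | succ m ih =>
    rcases lt_or_ge #A (m + 1) with hA | hA
    · simp [powersetCard_eq_empty.2 hA]
    obtain ⟨c, ⟨hc0, hc1⟩, hrec⟩ := exists_mul_sum_powersetCard_succ_exp_eq A v hA
    set μ := 𝔼 x ∈ A, v x
    have hAne : A.Nonempty := card_pos.1 (by omega)
    have hμ : μ ∈ Set.Icc lo hi :=
      ⟨le_expect hAne fun x hx => (hv x hx).1, expect_le hAne fun x hx => (hv x hx).2⟩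
    have hcentred : ∑ x ∈ A, c * (v x - μ) = 0 := by
      rw [← mul_sum, sum_sub_distrib, sum_const, nsmul_eq_mul, card_mul_expect, sub_self, mul_zero]
    have hbound : ∀ x ∈ A, |c * (v x - μ)| ≤ hi - lo := by
      intro x hx
      rw [abs_mul, abs_of_nonneg hc0]
      have : |v x - μ| ≤ hi - lo := abs_sub_le_iff.2 ⟨by linarith [(hv x hx).2, hμ.1],
        by linarith [(hv x hx).1, hμ.2]⟩
      nlinarith [abs_nonneg (v x - μ)]
    have hchoose : (#A : ℝ) * (#A - 1).choose m = (m + 1) * (#A).choose (m + 1) := by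
      rw [mul_comm ((m : ℝ) + 1)]
      exact_mod_cast (Nat.sub_add_cancel (by omega : 1 ≤ #A)) ▸ Nat.add_one_mul_choose_eq (#A - 1) m
    have hexp : exp ((m + 1) * (hi - lo) ^ 2 / 2) =
        exp ((hi - lo) ^ 2 / 2) * exp (m * (hi - lo) ^ 2 / 2) := by
      rw [← exp_add]; ring_nf
    refine le_of_mul_le_mul_left ?_ (by positivity : (0 : ℝ) < m + 1)
    push_cast
    rw [hrec]
    calc ∑ x ∈ A, exp (c * (v x - μ)) *
          ∑ H ∈ (A.erase x).powersetCard m, exp (∑ z ∈ H, v z - m * 𝔼 z ∈ A.erase x, v z)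
        ≤ ∑ x ∈ A, exp (c * (v x - μ)) * ((#A - 1).choose m * exp (m * (hi - lo) ^ 2 / 2)) := by
          refine sum_le_sum fun x hx => mul_le_mul_of_nonneg_left ?_ (exp_nonneg _)
          rw [← card_erase_of_mem hx, ← card_powersetCard]
          exact ih _ fun z hz => hv z (mem_of_mem_erase hz)
      _ ≤ #A * exp ((hi - lo) ^ 2 / 2) * ((#A - 1).choose m * exp (m * (hi - lo) ^ 2 / 2)) := by
          rw [← sum_mul]
          gcongr
          exact sum_exp_le_card_mul_exp_sq_div_two hcentred hbound
      _ = (m + 1) * (#(A.powersetCard (m + 1)) * exp ((m + 1) * (hi - lo) ^ 2 / 2)) := by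
          rw [card_powersetCard, hexp]
          linear_combination (exp ((hi - lo) ^ 2 / 2) * exp (m * (hi - lo) ^ 2 / 2)) * hchoose

theorem card_filter_le_sum_sub_mul_expect_le (A : Finset ι) (v : ι → ℝ) {lo hi : ℝ}
    (hv : ∀ x ∈ A, v x ∈ Set.Icc lo hi) (m : ℕ) {s : ℝ} (hs : 0 ≤ s) :
    (#{H ∈ A.powersetCard m | s ≤ ∑ x ∈ H, v x - m * 𝔼 x ∈ A, v x} : ℝ) ≤
      exp (-s ^ 2 / (2 * m * (hi - lo) ^ 2)) * #(A.powersetCard m) := by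
  set t := s / (m * (hi - lo) ^ 2)
  have ht : 0 ≤ t := by positivity
  have hexponent : m * (t * hi - t * lo) ^ 2 / 2 - t * s = -s ^ 2 / (2 * m * (hi - lo) ^ 2) := by
    rcases eq_or_ne ((m : ℝ) * (hi - lo) ^ 2) 0 with h | h
    · simp only [t, h, div_zero, zero_mul, sub_self]
      rw [mul_assoc, h]
      simp
    · simp only [t]
      field_simp
      ring
  have hscaled : ∀ H, ∑ x ∈ H, t * v x - m * 𝔼 x ∈ A, t * v x =
      t * (∑ x ∈ H, v x - m * 𝔼 x ∈ A, v x) := by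
    intro H; rw [← mul_sum, ← mul_expect]; ring
  have hmgf := sum_powersetCard_exp_sub_le A (fun x => t * v x) (lo := t * lo) (hi := t * hi)
    (fun x hx => ⟨by gcongr; exact (hv x hx).1, by gcongr; exact (hv x hx).2⟩) m
  rw [← hexponent, exp_sub, div_mul_eq_mul_div, le_div_iff₀ (exp_pos _)]
  calc (#{H ∈ A.powersetCard m | s ≤ ∑ x ∈ H, v x - m * 𝔼 x ∈ A, v x} : ℝ) * exp (t * s)
      ≤ ∑ H ∈ A.powersetCard m with s ≤ ∑ x ∈ H, v x - m * 𝔼 x ∈ A, v x,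
          exp (∑ x ∈ H, t * v x - m * 𝔼 x ∈ A, t * v x) := by
        rw [← nsmul_eq_mul]
        refine card_nsmul_le_sum _ _ _ fun H hH => ?_
        rw [hscaled, exp_le_exp]
        exact mul_le_mul_of_nonneg_left (mem_filter.1 hH).2 ht
    _ ≤ ∑ H ∈ A.powersetCard m, exp (∑ x ∈ H, t * v x - m * 𝔼 x ∈ A, t * v x) :=
        sum_le_sum_of_subset_of_nonneg (filter_subset _ _) fun _ _ _ => (exp_pos _).le
    _ ≤ _ := hmgf.trans_eq (mul_comm _ _)

theorem card_filter_lt_abs_sum_sub_mul_expect_le (A : Finset ι) (v : ι → ℝ) {lo hi : ℝ}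
    (hv : ∀ x ∈ A, v x ∈ Set.Icc lo hi) (m : ℕ) {s : ℝ} (hs : 0 ≤ s) :
    (#{H ∈ A.powersetCard m | s < |∑ x ∈ H, v x - m * 𝔼 x ∈ A, v x|} : ℝ) ≤
      2 * exp (-s ^ 2 / (2 * m * (hi - lo) ^ 2)) * #(A.powersetCard m) := by
  classical
  have hneg := card_filter_le_sum_sub_mul_expect_le A (fun x => -v x) (lo := -hi) (hi := -lo)
    (fun x hx => ⟨neg_le_neg (hv x hx).2, neg_le_neg (hv x hx).1⟩) m hs
  simp only [sum_neg_distrib, expect_neg_distrib, neg_sub_neg] at hneg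
  have hpos := card_filter_le_sum_sub_mul_expect_le A v hv m hs
  calc (#{H ∈ A.powersetCard m | s < |∑ x ∈ H, v x - m * 𝔼 x ∈ A, v x|} : ℝ)
      ≤ #({H ∈ A.powersetCard m | s ≤ ∑ x ∈ H, v x - m * 𝔼 x ∈ A, v x} ∪
          {H ∈ A.powersetCard m | s ≤ -∑ x ∈ H, v x - m * -𝔼 x ∈ A, v x}) := by
        gcongr
        intro H
        simp only [mem_union, mem_filter, lt_abs]
        rintro ⟨hH, hdev | hdev⟩
        · exact Or.inl ⟨hH, hdev.le⟩
        · exact Or.inr ⟨hH, by linarith⟩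
    _ ≤ _ := by
        grw [card_union_le]
        push_cast
        linarith

end SamplingWithoutReplacement

theorem tsum_indicator_le_mul_tsum_indicator_add {Y : Type*} {p q : Y → ℝ} {B : Set Y} {c δ : ℝ}
    (hp0 : ∀ y, 0 ≤ p y) (hp : Summable p) (hq0 : ∀ y, 0 ≤ q y) (hq : Summable q) (hc : 0 ≤ c)
    (hpq : ∀ y ∉ B, p y ≤ c * q y) (hB : ∑' y, B.indicator p y ≤ δ) (Ys : Set Y) :
    ∑' y, Ys.indicator p y ≤ c * ∑' y, Ys.indicator q y + δ := by
  have hpoint : ∀ y, Ys.indicator p y ≤ c * Ys.indicator q y + B.indicator p y := by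
    intro y
    by_cases hY : y ∈ Ys <;> by_cases hyB : y ∈ B <;>
      simp [hY, hyB, hp0 y, mul_nonneg hc (hq0 y), hpq y]
  calc ∑' y, Ys.indicator p y ≤ ∑' y, (c * Ys.indicator q y + B.indicator p y) :=
        (hp.indicator Ys).tsum_le_tsum hpoint (((hq.indicator Ys).mul_left c).add (hp.indicator B))
    _ = c * ∑' y, Ys.indicator q y + ∑' y, B.indicator p y := by
        rw [((hq.indicator Ys).mul_left c).tsum_add (hp.indicator B), tsum_mul_left]
    _ ≤ c * ∑' y, Ys.indicator q y + δ := by gcongr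

theorem le_exp_mul_of_four_mul_abs_sub_le {a b x : ℝ} (hb : 0 ≤ b)
    (hx : 4 + x ≤ exp x * (4 - x)) (hab : 4 * |a - b| ≤ x * (a + b)) : a ≤ exp x * b := by
  have h4x : 0 < 4 - x := by
    by_contra! h
    nlinarith [exp_pos x]
  have : a * (4 - x) ≤ b * (exp x * (4 - x)) := by
    nlinarith [le_abs_self (a - b)]
  nlinarith [exp_pos x]

theorem four_add_le_exp_mul_four_sub {x : ℝ} (hx0 : 0 ≤ x) (hx8 : x ^ 2 ≤ 8) :
    4 + x ≤ exp x * (4 - x) := by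
  have hsq : (1 + x / 2) ^ 2 ≤ exp x :=
    calc (1 + x / 2) ^ 2 ≤ exp (x / 2) ^ 2 := by gcongr; linarith [add_one_le_exp (x / 2)]
      _ = exp x := by rw [sq, ← exp_add, add_halves]
  have h4 : 0 ≤ 4 - x := by nlinarith
  nlinarith [mul_le_mul_of_nonneg_right hsq h4, mul_nonneg hx0 (sub_nonneg.2 hx8)]

theorem four_mul_exp_sub_one_sq_le {ε : ℝ} (hε : 0 ≤ ε) :
    4 * (exp ε - 1) ^ 2 ≤ (exp (2 * ε) - 1) ^ 2 := by
  have h1 : 1 ≤ exp ε := one_le_exp hε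
  rw [two_mul, exp_add]
  nlinarith [mul_nonneg (sub_nonneg.2 h1) (sub_nonneg.2 h1)]

theorem log_two_mul_le_two_mul_log {x : ℝ} (hx : 2 ≤ x) : log (2 * x) ≤ 2 * log x := by
  rw [log_mul two_ne_zero (by positivity), two_mul]
  gcongr

theorem privacy_parameter_bounds {ε δ : ℝ} {n d : ℕ} (hε : 0 < ε) (hδ0 : 0 < δ) (hδ1 : δ < 1)
    (hn : 0 < n) (hd2 : 4 * (exp (2 * ε) - 1) ^ 2 * log (12 * exp ε * n / δ) < d)
    (L : ℝ) (hL : L = log (24 * exp ε * n / δ)) (ε' : ℝ)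
    (hε' : ε' = (exp (2 * ε) - 1) * √(16 / d * L)) :
    0 < d ∧ 0 ≤ ε' ∧ ε' ^ 2 ≤ 8 ∧ 64 * L * (exp ε - 1) ^ 2 ≤ ε' ^ 2 * d ∧
      2 * exp (-L) = 1 / (12 * n) * (δ / exp ε) := by
  have hx : 2 ≤ 12 * exp ε * n / δ := by
    rw [le_div_iff₀ hδ0]
    nlinarith [one_le_exp hε.le, (Nat.one_le_cast.2 hn : (1 : ℝ) ≤ n)]
  rw [show 24 * exp ε * n / δ = 2 * (12 * exp ε * n / δ) by ring] at hL
  have hL0 : 0 ≤ L := hL ▸ log_nonneg (by linarith)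
  have hLle : L ≤ 2 * log (12 * exp ε * n / δ) := hL ▸ log_two_mul_le_two_mul_log hx
  set E := exp (2 * ε) - 1
  have hd0 : (0 : ℝ) < d := (mul_nonneg (by positivity) (log_nonneg (by linarith))).trans_lt hd2
  have hsq : ε' ^ 2 * d = 16 * E ^ 2 * L := by
    rw [hε', mul_pow, sq_sqrt (by positivity)]
    field_simp
  refine ⟨by exact_mod_cast hd0, hε' ▸ mul_nonneg (sub_nonneg.2 (one_le_exp (by linarith)))
    (sqrt_nonneg _), le_of_mul_le_mul_right ?_ hd0, ?_, ?_⟩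
  · nlinarith [mul_le_mul_of_nonneg_left hLle (sq_nonneg E)]
  · rw [hsq]
    nlinarith [mul_le_mul_of_nonneg_left (four_mul_exp_sub_one_sq_le hε.le) hL0]
  · rw [hL, exp_neg, exp_log (by positivity)]
    field_simp

theorem one_sub_mul_card_le_card_filter_forall_le {α ι : Type*} [Fintype ι] (P : Finset α)
    (M : ι → α → ℝ) (hM : ∀ i, ∀ H ∈ P, 0 ≤ M i H) {θ η : ℝ} (hθ : 0 < θ)
    (hsum : ∀ i, ∑ H ∈ P, M i H ≤ η * θ * #P) :
    (1 - Fintype.card ι * η) * #P ≤ #{H ∈ P | ∀ i, M i H ≤ θ} := by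
  classical
  have hmarkov : ∀ i, (#{H ∈ P | θ < M i H} : ℝ) ≤ η * #P := by
    intro i
    refine le_of_mul_le_mul_right ?_ hθ
    calc (#{H ∈ P | θ < M i H} : ℝ) * θ ≤ ∑ H ∈ P with θ < M i H, M i H := by
          rw [← nsmul_eq_mul]
          exact card_nsmul_le_sum _ _ _ fun H hH => (mem_filter.1 hH).2.le
      _ ≤ ∑ H ∈ P, M i H :=
          sum_le_sum_of_subset_of_nonneg (filter_subset _ _) fun H hH _ => hM i H hH
      _ ≤ η * #P * θ := by linarith [hsum i]
  have hbad : (#{H ∈ P | ¬∀ i, M i H ≤ θ} : ℝ) ≤ Fintype.card ι * η * #P :=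
    calc (#{H ∈ P | ¬∀ i, M i H ≤ θ} : ℝ) ≤ #(univ.biUnion fun i => {H ∈ P | θ < M i H}) := by
          gcongr
          intro H
          simp only [mem_filter, mem_biUnion, mem_univ, true_and, not_forall, not_le]
          exact fun ⟨hH, i, hi⟩ => ⟨i, hH, hi⟩
      _ ≤ ∑ i, (#{H ∈ P | θ < M i H} : ℝ) := by exact_mod_cast card_biUnion_le
      _ ≤ ∑ _i : ι, η * #P := sum_le_sum fun i _ => hmarkov i
      _ = Fintype.card ι * η * #P := by rw [sum_const, card_univ, nsmul_eq_mul, mul_assoc]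
  have hsplit : (#{H ∈ P | ∀ i, M i H ≤ θ} : ℝ) + #{H ∈ P | ¬∀ i, M i H ≤ θ} = #P := by
    exact_mod_cast card_filter_add_card_filter_not _
  linarith

theorem summable_of_tsum_eq_one {Y : Type*} {f : Y → ℝ} (h : ∑' y, f y = 1) : Summable f :=
  by_contra fun hf => by simp [tsum_eq_zero_of_not_summable hf] at h

theorem natCast_half_mul_expect {d : ℕ} (hd : Even d) (f : Fin d → ℝ) :
    ((d / 2 : ℕ) : ℝ) * 𝔼 x, f x = (∑ x, f x) / 2 := by
  obtain ⟨k, rfl⟩ := hd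
  have := Fintype.card_mul_expect f
  rw [Fintype.card_fin, Nat.cast_add] at this
  rw [show (k + k) / 2 = k by omega]
  linarith

theorem card_univ_sdiff_of_card_eq_half {d : ℕ} (hd : Even d) {H : Finset (Fin d)}
    (hH : #H = d / 2) : #(univ \ H) = d / 2 := by
  obtain ⟨k, rfl⟩ := hd
  rw [card_sdiff_of_subset (subset_univ H), card_univ, Fintype.card_fin, hH]
  omega

section Randomizer

variable {d : ℕ} {Y : Type*}

def PrivacyLossLE (R : Fin d → Y → ℝ) (H : Finset (Fin d)) (ε' : ℝ) (y : Y) : Prop :=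
  probU R H y ≤ exp ε' * probU R (univ \ H) y ∧ probU R (univ \ H) y ≤ exp ε' * probU R H y

-- Measured under `R(U_[d])`, which does not depend on `H` and dominates both `R(U_H)` and
-- `R(U_H̄)` up to the factor `e^ε`.
noncomputable def highLossMass (R : Fin d → Y → ℝ) (H : Finset (Fin d)) (ε' : ℝ) : ℝ :=
  ∑' y, {y | ¬PrivacyLossLE R H ε' y}.indicator (probU R univ) y

variable {R : Fin d → Y → ℝ}

theorem probU_eq_expect (S : Finset (Fin d)) (y : Y) :
    probU R S y = 𝔼 x ∈ S, R x y :=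
  (expect_eq_sum_div_card S _).symm

theorem probU_nonneg (hR0 : ∀ x y, 0 ≤ R x y) (S : Finset (Fin d)) (y : Y) : 0 ≤ probU R S y :=
  div_nonneg (sum_nonneg fun x _ => hR0 x y) (Nat.cast_nonneg _)

theorem summable_probU (hR1 : ∀ x, ∑' y, R x y = 1) (S : Finset (Fin d)) :
    Summable (probU R S) :=
  (summable_sum fun x _ => summable_of_tsum_eq_one (hR1 x)).div_const _

theorem tsum_probU_le_one (hR1 : ∀ x, ∑' y, R x y = 1) (S : Finset (Fin d)) :
    ∑' y, probU R S y ≤ 1 := by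
  simp only [probU]
  rw [tsum_div_const, Summable.tsum_finsetSum fun x _ => summable_of_tsum_eq_one (hR1 x)]
  simpa [hR1] using div_self_le_one (#S : ℝ)

theorem probU_le_exp_mul_probU {ε : ℝ} (hpriv : ∀ x x' y, R x y ≤ exp ε * R x' y)
    {S S' : Finset (Fin d)} (hS : S.Nonempty) (hS' : S'.Nonempty) (y : Y) :
    probU R S y ≤ exp ε * probU R S' y := by
  rw [probU_eq_expect, probU_eq_expect, mul_expect]
  exact expect_le hS fun x _ => le_expect hS' fun x' _ => hpriv x x' y

theorem exists_forall_mem_Icc_add_mul_expect {ε : ℝ} (hpriv : ∀ x x' y, R x y ≤ exp ε * R x' y)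
    (hε : 0 ≤ ε) (y : Y) : ∃ lo, ∀ x, R x y ∈ Set.Icc lo (lo + (exp ε - 1) * 𝔼 x, R x y) := by
  rcases (univ : Finset (Fin d)).eq_empty_or_nonempty with h | hne
  · exact ⟨0, fun x => absurd (mem_univ x) (by simp [h])⟩
  obtain ⟨x₀, -, hx₀⟩ := exists_min_image univ (fun x => R x y) hne
  have hx₀μ : R x₀ y ≤ 𝔼 x, R x y := le_expect hne fun x _ => hx₀ x (mem_univ x)
  refine ⟨R x₀ y, fun x => ⟨hx₀ x (mem_univ x), ?_⟩⟩
  nlinarith [hpriv x x₀ y, mul_le_mul_of_nonneg_left hx₀μ (sub_nonneg.2 (one_le_exp hε))]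

theorem privacyLossLE_of_abs_sub_le (hR0 : ∀ x y, 0 ≤ R x y) (hd : Even d)
    {H : Finset (Fin d)} (hH : #H = d / 2) {ε' : ℝ} (hε' : 4 + ε' ≤ exp ε' * (4 - ε')) {y : Y}
    (h : |∑ x ∈ H, R x y - ((d / 2 : ℕ) : ℝ) * 𝔼 x, R x y| ≤ ε' / 8 * ∑ x, R x y) :
    PrivacyLossLE R H ε' y := by
  set a := ∑ x ∈ H, R x y
  set b := ∑ x ∈ univ \ H, R x y
  have hsum : ∑ x, R x y = a + b := by rw [← sum_sdiff (subset_univ H)]; ring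
  rw [natCast_half_mul_expect hd, hsum, show a - (a + b) / 2 = (a - b) / 2 by ring, abs_div,
    abs_two] at h
  have ha : 0 ≤ a := sum_nonneg fun x _ => hR0 x y
  have hb : 0 ≤ b := sum_nonneg fun x _ => hR0 x y
  simp only [PrivacyLossLE, probU, card_univ_sdiff_of_card_eq_half hd hH, hH, ← mul_div_assoc]
  constructor <;> gcongr
  · exact le_exp_mul_of_four_mul_abs_sub_le hb hε' (by linarith)
  · exact le_exp_mul_of_four_mul_abs_sub_le ha hε' (by rw [abs_sub_comm]; linarith)

theorem card_filter_not_privacyLossLE_le {ε ε' L : ℝ} (hR0 : ∀ x y, 0 ≤ R x y)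
    (hpriv : ∀ x x' y, R x y ≤ exp ε * R x' y) (hε : 0 < ε) (hd : Even d) (hε'0 : 0 ≤ ε')
    (hε'8 : ε' ^ 2 ≤ 8) (hL : 64 * L * (exp ε - 1) ^ 2 ≤ ε' ^ 2 * d) (y : Y) :
    (#{H ∈ powersetCard (d / 2) univ | ¬PrivacyLossLE R H ε' y} : ℝ) ≤
      2 * exp (-L) * #(powersetCard (d / 2) (univ : Finset (Fin d))) := by
  obtain ⟨lo, hlo⟩ := exists_forall_mem_Icc_add_mul_expect hpriv hε.le y
  obtain ⟨μ, hμdef⟩ : ∃ μ, 𝔼 x, R x y = μ := ⟨_, rfl⟩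
  rw [hμdef] at hlo
  have hsum : ∑ x, R x y = d * μ := by rw [← hμdef, ← Fintype.card_mul_expect, Fintype.card_fin]
  have hsub : (#{H ∈ powersetCard (d / 2) univ | ¬PrivacyLossLE R H ε' y} : ℝ) ≤
      #{H ∈ powersetCard (d / 2) univ |
        ε' / 8 * (d * μ) < |∑ x ∈ H, R x y - ↑(d / 2) * μ|} := by
    gcongr with H hH
    exact fun hloss => not_le.1 fun h => hloss
      (privacyLossLE_of_abs_sub_le hR0 hd (mem_powersetCard.1 hH).2
        (four_add_le_exp_mul_four_sub hε'0 hε'8) (by rwa [hsum, hμdef]))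
  refine hsub.trans ?_
  have hμ0 : 0 ≤ μ := by rw [← hμdef]; exact expect_nonneg fun x _ => hR0 x y
  rcases hμ0.eq_or_lt with rfl | hμ
  · have hzero : ∀ x, R x y = 0 := fun x =>
      (expect_eq_zero_iff_of_nonneg fun x _ => hR0 x y).1 hμdef x (mem_univ x)
    rw [filter_eq_empty_iff.2 fun H _ => by simp [hzero], card_empty, Nat.cast_zero]
    positivity
  have hd0 : (0 : ℝ) < d := by
    rcases d.eq_zero_or_pos with rfl | h
    · simp at hμdef; linarith
    · exact_mod_cast h
  have htail := card_filter_lt_abs_sum_sub_mul_expect_le univ (fun x => R x y)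
    (fun x _ => hlo x) (d / 2) (s := ε' / 8 * (d * μ)) (by positivity)
  rw [hμdef, add_sub_cancel_left] at htail
  refine htail.trans ?_
  have hhalf : 2 * ((d / 2 : ℕ) : ℝ) = d := by exact_mod_cast Nat.two_mul_div_two_of_even hd
  have hexp : 0 < exp ε - 1 := sub_pos.2 (one_lt_exp_iff.2 hε)
  -- the tail exponent is `ε'^2 d / (64 (e^ε - 1)^2) ≥ L`
  gcongr
  rw [hhalf, neg_div, neg_le_neg_iff, le_div_iff₀ (by positivity)]
  linear_combination (d * μ ^ 2 / 64) * hL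

theorem sum_highLossMass_le {ε ε' L : ℝ} (hR0 : ∀ x y, 0 ≤ R x y) (hR1 : ∀ x, ∑' y, R x y = 1)
    (hpriv : ∀ x x' y, R x y ≤ exp ε * R x' y) (hε : 0 < ε) (hd : Even d) (hε'0 : 0 ≤ ε')
    (hε'8 : ε' ^ 2 ≤ 8) (hL : 64 * L * (exp ε - 1) ^ 2 ≤ ε' ^ 2 * d) :
    ∑ H ∈ powersetCard (d / 2) univ, highLossMass R H ε' ≤
      2 * exp (-L) * #(powersetCard (d / 2) (univ : Finset (Fin d))) := by
  set P := powersetCard (d / 2) (univ : Finset (Fin d))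
  have hfiber : ∀ y, ∑ H ∈ P, {y | ¬PrivacyLossLE R H ε' y}.indicator (probU R univ) y =
      #{H ∈ P | ¬PrivacyLossLE R H ε' y} * probU R univ y := by
    intro y
    simp only [Set.indicator_apply, Set.mem_ofPred_eq]
    rw [← sum_filter, sum_const, nsmul_eq_mul]
  have hpoint : ∀ y, #{H ∈ P | ¬PrivacyLossLE R H ε' y} * probU R univ y ≤
      2 * exp (-L) * #P * probU R univ y := fun y =>
    mul_le_mul_of_nonneg_right (card_filter_not_privacyLossLE_le hR0 hpriv hε hd hε'0 hε'8 hL y)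
      (probU_nonneg hR0 _ y)
  have hsummable := (summable_probU hR1 univ).mul_left (2 * exp (-L) * #P)
  simp only [highLossMass]
  rw [← Summable.tsum_finsetSum fun H _ => (summable_probU hR1 univ).indicator _, tsum_congr hfiber]
  calc ∑' y, #{H ∈ P | ¬PrivacyLossLE R H ε' y} * probU R univ y
      ≤ ∑' y, 2 * exp (-L) * #P * probU R univ y :=
        (hsummable.of_nonneg_of_le (fun y => mul_nonneg (Nat.cast_nonneg _) (probU_nonneg hR0 _ y))
          hpoint).tsum_le_tsum hpoint hsummable
    _ ≤ 2 * exp (-L) * #P := by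
        rw [tsum_mul_left]
        exact mul_le_of_le_one_right (by positivity) (tsum_probU_le_one hR1 univ)

theorem highLossMass_nonneg (hR0 : ∀ x y, 0 ≤ R x y) (H : Finset (Fin d)) (ε' : ℝ) :
    0 ≤ highLossMass R H ε' :=
  tsum_nonneg fun y => Set.indicator_nonneg (fun y _ => probU_nonneg hR0 univ y) y

theorem qApproxPrivate_of_highLossMass_le {ε ε' δ : ℝ} (hR0 : ∀ x y, 0 ≤ R x y)
    (hR1 : ∀ x, ∑' y, R x y = 1) (hpriv : ∀ x x' y, R x y ≤ exp ε * R x' y)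
    {H : Finset (Fin d)} (hH : H.Nonempty) (hHc : (univ \ H).Nonempty)
    (hmass : highLossMass R H ε' ≤ δ / exp ε) : QApproxPrivate R H ε' δ := by
  rw [le_div_iff₀' (exp_pos ε)] at hmass
  have hB : ∀ S : Finset (Fin d), S.Nonempty →
      ∑' y, {y | ¬PrivacyLossLE R H ε' y}.indicator (probU R S) y ≤ δ := by
    intro S hS
    refine le_trans ?_ hmass
    rw [highLossMass, ← tsum_mul_left]
    refine ((summable_probU hR1 S).indicator _).tsum_le_tsum (fun y => ?_)
      (((summable_probU hR1 univ).indicator _).mul_left _)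
    rw [← Set.indicator_const_mul]
    exact Set.indicator_le_indicator (probU_le_exp_mul_probU hpriv hS (hH.mono (subset_univ H)) y)
  intro Ys
  exact ⟨tsum_indicator_le_mul_tsum_indicator_add (probU_nonneg hR0 H) (summable_probU hR1 H)
      (probU_nonneg hR0 _) (summable_probU hR1 _) (exp_nonneg ε')
      (fun y hy => (not_not.1 hy).1) (hB H hH) Ys,
    tsum_indicator_le_mul_tsum_indicator_add (probU_nonneg hR0 _) (summable_probU hR1 _)
      (probU_nonneg hR0 H) (summable_probU hR1 H) (exp_nonneg ε')
      (fun y hy => (not_not.1 hy).2) (hB _ hHc) Ys⟩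

end Randomizer

theorem stmt_8_general {Y : Type*} (ε δ : ℝ) (n d : ℕ)
    (hε : 0 < ε) (hδ : δ ∈ Set.Ioo (0 : ℝ) 1) (hd : Even d)
    (hd2 : 4 * (Real.exp (2 * ε) - 1) ^ 2 *
        Real.log (12 * Real.exp ε * (n : ℝ) / δ) < (d : ℝ))
    (R : Fin n → Fin d → Y → ℝ)
    (hR0 : ∀ i x y, 0 ≤ R i x y) (hR1 : ∀ i x, ∑' y, R i x y = 1)
    (hpriv : ∀ i x x' y, R i x y ≤ Real.exp ε * R i x' y) :
    2 / 3 <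
      (((Finset.powersetCard (d / 2) (Finset.univ : Finset (Fin d))).filter
          (fun H => ∀ i : Fin n, QApproxPrivate (R i) H
            ((Real.exp (2 * ε) - 1) * Real.sqrt (16 / (d : ℝ) *
              Real.log (24 * Real.exp ε * (n : ℝ) / δ))) δ)).card : ℝ)
        / ((Finset.powersetCard (d / 2) (Finset.univ : Finset (Fin d))).card : ℝ) := by
  obtain ⟨hδ0, hδ1⟩ := hδ
  set P := powersetCard (d / 2) (univ : Finset (Fin d))
  have hP : (0 : ℝ) < #P := by
    simpa [P, card_powersetCard] using Nat.choose_pos (Nat.div_le_self d 2)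
  rcases n.eq_zero_or_pos with rfl | hn
  · rw [filter_true_of_mem fun H _ i => i.elim0, div_self hP.ne']
    norm_num
  obtain ⟨hd0, hε'0, hε'8, hL, hexpL⟩ := privacy_parameter_bounds hε hδ0 hδ1 hn hd2 _ rfl _ rfl
  have hmass : ∀ i, ∑ H ∈ P, highLossMass (R i) H _ ≤ 1 / (12 * n) * (δ / exp ε) * #P :=
    fun i => hexpL ▸ sum_highLossMass_le (hR0 i) (hR1 i) (hpriv i) hε hd hε'0 hε'8 hL
  have hgood := one_sub_mul_card_le_card_filter_forall_le P _
    (fun i H _ => highLossMass_nonneg (hR0 i) H _) (by positivity) hmass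
  refine (lt_div_iff₀ hP).2 (lt_of_lt_of_le ?_ (hgood.trans (Nat.cast_le.2 (card_le_card
    fun H => ?_))))
  · rw [Fintype.card_fin]
    field_simp
    linarith
  have hhalf : 0 < d / 2 := by
    obtain ⟨k, rfl⟩ := hd
    omega
  simp only [mem_filter]
  refine fun ⟨hH, hmassH⟩ => ⟨hH, fun i => qApproxPrivate_of_highLossMass_le (hR0 i) (hR1 i)
    (hpriv i) ?_ ?_ (hmassH i)⟩
  · exact card_pos.1 ((mem_powersetCard.1 hH).2 ▸ hhalf)
  · exact card_pos.1 (card_univ_sdiff_of_card_eq_half hd (mem_powersetCard.1 hH).2 ▸ hhalf)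

/-- for `ε > 0`, `δ ∈ (0,1)`, even `d > 4(e^{2ε}-1)² ln(12 e^ε n/δ)`,
and `n` `ε`-private randomizers `R_1,…,R_n` from `[d]` to a countable `𝒴`: if `H`
is uniform among size-`d/2` subsets of `[d]`, then with probability greater than
`2/3` over `H`, every `Q_{H,R_i}` satisfies `(ε',δ)`-privacy, where
`ε' = (e^{2ε}-1)√((16/d) ln(24 e^ε n/δ))`. -/
theorem stmt_8 {Y : Type*} [Countable Y] (ε δ : ℝ) (n d : ℕ)
    (hε : 0 < ε) (hδ : δ ∈ Set.Ioo (0 : ℝ) 1) (hd : Even d)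
    (hd2 : 4 * (Real.exp (2 * ε) - 1) ^ 2 *
        Real.log (12 * Real.exp ε * (n : ℝ) / δ) < (d : ℝ))
    (R : Fin n → Fin d → Y → ℝ)
    (hR0 : ∀ i x y, 0 ≤ R i x y) (hR1 : ∀ i x, ∑' y, R i x y = 1)
    (hpriv : ∀ i x x' y, R i x y ≤ Real.exp ε * R i x' y) :
    2 / 3 <
      (((Finset.powersetCard (d / 2) (Finset.univ : Finset (Fin d))).filter
          (fun H => ∀ i : Fin n, QApproxPrivate (R i) H
            ((Real.exp (2 * ε) - 1) * Real.sqrt (16 / (d : ℝ) *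
              Real.log (24 * Real.exp ε * (n : ℝ) / δ))) δ)).card : ℝ)
        / ((Finset.powersetCard (d / 2) (Finset.univ : Finset (Fin d))).card : ℝ) :=
  stmt_8_general ε δ n d hε hδ hd hd2 R hR0 hR1 hpriv
end
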